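/- arXiv:1907.05725 — 6 statements merged into one kernel-verified Lean document; each statement's English description precedes it below -/
import Mathlib

section
/- Let δ ∈ (0, 1/2] and let c be an integer with c ≥ max(32000, 2000·log(1/δ)/δ). Let Y₁, …, Y_K be independent random variables with values in [0,1], let X = Σ_{k=1}^K Y_k, and let X̄ = (1/c)·Σ_{i=1}^c X_i, where X₁, …, X_c are independent copies of X. If E[X] ≤ δ/3 and P[X ≥ δ] = p, then P[X̄ ≥ δ] ≤ p/2. -/
/-!
Split `∑ i, X_i ≥ c δ` according to whether one copy alone exceeds `c δ / 2`, or some copy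
exceeds `δ` while the other copies together exceed `c δ / 2`. The second event has probability
`p` times a Chernoff tail `exp (c δ / 3 - log 2 · c δ / 2)`. For the first one, a first-passage
(Hoffmann-Jørgensen) argument, valid because the summands of `X` are independent and at most `1`,
gives `P[X ≥ a + b + 1] ≤ P[X ≥ a] · P[X ≥ b]`; with `a = δ` this is `p` times a Chernoff tail
of the same size. The choice of `c` makes `c` times that tail at most `1/4`.
-/

open MeasureTheory ProbabilityTheory Finset Real
open scoped ENNReal

section PartialSums

variable {ι : Type*} [Fintype ι] [LinearOrder ι]

lemma sum_filter_lt_add (f : ι → ℝ) (k : ι) :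
    ∑ l with l < k, f l + f k = ∑ l with l ≤ k, f l := by
  rw [add_comm, ← sum_insert (by simp)]
  congr 1
  ext l
  simp [le_iff_lt_or_eq, or_comm]

lemma sum_filter_le_add (f : ι → ℝ) (k : ι) :
    ∑ l with l ≤ k, f l + ∑ l with k < l, f l = ∑ l, f l := by
  simpa only [not_le] using sum_filter_add_sum_filter_not univ (· ≤ k) f

lemma exists_sum_filter_lt_lt_le_sum_filter_le {f : ι → ℝ} (hf : ∀ l, 0 ≤ f l) {a : ℝ}
    (ha : 0 < a) (h : a ≤ ∑ l, f l) :
    ∃ k, ∑ l with l < k, f l < a ∧ a ≤ ∑ l with l ≤ k, f l := by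
  have : Nonempty ι := by
    by_contra hι
    rw [not_nonempty_iff] at hι
    simp only [univ_eq_empty, sum_empty] at h
    linarith
  obtain ⟨top, htop⟩ : ∃ top : ι, ∀ l, l ≤ top := Finite.exists_max id
  have hne : (univ.filter fun k => a ≤ ∑ l with l ≤ k, f l).Nonempty :=
    ⟨top, mem_filter.2 ⟨mem_univ _, by rwa [filter_true_of_mem fun l _ => htop l]⟩⟩
  obtain ⟨k, hk, hmin⟩ := exists_min_image _ id hne
  refine ⟨k, not_le.1 fun hak => ?_, (mem_filter.1 hk).2⟩
  have hlt : (univ.filter (· < k)).Nonempty := by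
    by_contra hempty
    rw [not_nonempty_iff_eq_empty] at hempty
    rw [hempty, sum_empty] at hak
    linarith
  obtain ⟨m, hm, hmax⟩ := exists_max_image _ id hlt
  have hsub : a ≤ ∑ l with l ≤ m, f l :=
    hak.trans (sum_le_sum_of_subset_of_nonneg (fun l hl => by simp_all) fun l _ _ => hf l)
  exact absurd (hmin m (by simpa using hsub)) (not_le.2 (by simpa using hm))

end PartialSums

section FirstPassage

variable {Ω ι : Type*}

lemma measurable_sum_iSup_comap {Y : ι → Ω → ℝ} {S : Set ι} {s : Finset ι}
    (hs : ∀ l ∈ s, l ∈ S) :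
    Measurable[⨆ i ∈ S, MeasurableSpace.comap (Y i) inferInstance] fun ω => ∑ l ∈ s, Y l ω :=
  Finset.measurable_sum s fun l hl => measurable_iff_comap_le.2 <|
    le_iSup₂ (f := fun i (_ : i ∈ S) => MeasurableSpace.comap (Y i) inferInstance) l (hs l hl)

variable [Fintype ι] [LinearOrder ι]

def firstPassage (Y : ι → Ω → ℝ) (a : ℝ) (k : ι) : Set Ω :=
  {ω | ∑ l with l < k, Y l ω < a ∧ a ≤ ∑ l with l ≤ k, Y l ω}

variable {Y : ι → Ω → ℝ}

lemma pairwise_disjoint_firstPassage (hY : ∀ l ω, 0 ≤ Y l ω) (a : ℝ) :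
    Pairwise (Function.onFun Disjoint (firstPassage Y a)) := by
  intro k k' hkk'
  wlog h : k < k' generalizing k k'
  · exact (this hkk'.symm (lt_of_le_of_ne (not_lt.1 h) hkk'.symm)).symm
  refine Set.disjoint_left.2 fun ω ⟨_, hk⟩ ⟨hk', _⟩ => ?_
  have : ∑ l with l ≤ k, Y l ω ≤ ∑ l with l < k', Y l ω :=
    sum_le_sum_of_subset_of_nonneg (fun l => by simpa using fun h' => h'.trans_lt h)
      fun l _ _ => hY l ω
  linarith

lemma firstPassage_subset (hY : ∀ l ω, 0 ≤ Y l ω) (a : ℝ) (k : ι) :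
    firstPassage Y a k ⊆ {ω | a ≤ ∑ l, Y l ω} := fun ω ⟨_, h⟩ =>
  h.trans (sum_le_sum_of_subset_of_nonneg (filter_subset _ _) fun l _ _ => hY l ω)

/-- Since `Y k ≤ 1`, the partial sums overshoot `a` by less than `1` at the first passage. -/
lemma exists_mem_firstPassage (hrange : ∀ k ω, Y k ω ∈ Set.Icc (0 : ℝ) 1) {a b : ℝ}
    (ha : 0 < a) (hb : 0 ≤ b) {ω : Ω} (h : a + b + 1 ≤ ∑ l, Y l ω) :
    ∃ k, ω ∈ firstPassage Y a k ∧ b ≤ ∑ l with k < l, Y l ω := by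
  obtain ⟨k, hlt, hle⟩ :=
    exists_sum_filter_lt_lt_le_sum_filter_le (fun l => (hrange l ω).1) ha (by linarith)
  have := sum_filter_lt_add (Y · ω) k
  have := sum_filter_le_add (Y · ω) k
  have := (hrange k ω).2
  exact ⟨k, ⟨hlt, hle⟩, by linarith⟩

variable [MeasurableSpace Ω] {μ : Measure Ω}

lemma measurableSet_firstPassage (hmeas : ∀ k, Measurable (Y k)) (a : ℝ) (k : ι) :
    MeasurableSet (firstPassage Y a k) :=
  (measurableSet_lt (Finset.measurable_sum _ fun l _ => hmeas l) measurable_const).inter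
    (measurableSet_le measurable_const (Finset.measurable_sum _ fun l _ => hmeas l))

lemma measure_firstPassage_inter_eq_mul (hmeas : ∀ k, Measurable (Y k))
    (hindep : iIndepFun Y μ) (a b : ℝ) (k : ι) :
    μ (firstPassage Y a k ∩ {ω | b ≤ ∑ l with k < l, Y l ω}) =
      μ (firstPassage Y a k) * μ {ω | b ≤ ∑ l with k < l, Y l ω} := by
  have h := indep_iSup_of_disjoint (fun i => (hmeas i).comap_le) hindep.iIndep
    (S := {l | l ≤ k}) (T := {l | k < l}) (Set.disjoint_left.2 fun l h h' => not_lt.2 h h')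
  have hle : ∀ l ∈ univ.filter (· ≤ k), l ∈ {l | l ≤ k} := fun l hl => (mem_filter.1 hl).2
  have hlt : ∀ l ∈ univ.filter (· < k), l ∈ {l | l ≤ k} := fun l hl => (mem_filter.1 hl).2.le
  have hgt : ∀ l ∈ univ.filter (k < ·), l ∈ {l | k < l} := fun l hl => (mem_filter.1 hl).2
  exact (Indep_iff _ _ _).1 h _ _
    ((measurableSet_lt (measurable_sum_iSup_comap hlt) measurable_const).inter
      (measurableSet_le measurable_const (measurable_sum_iSup_comap hle)))
    (measurableSet_le measurable_const (measurable_sum_iSup_comap hgt))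

theorem measure_sum_ge_add_add_one_le_mul (hmeas : ∀ k, Measurable (Y k))
    (hrange : ∀ k ω, Y k ω ∈ Set.Icc (0 : ℝ) 1) (hindep : iIndepFun Y μ) {a b : ℝ}
    (ha : 0 < a) (hb : 0 ≤ b) :
    μ {ω | a + b + 1 ≤ ∑ k, Y k ω} ≤ μ {ω | a ≤ ∑ k, Y k ω} * μ {ω | b ≤ ∑ k, Y k ω} := by
  have hY : ∀ l ω, 0 ≤ Y l ω := fun l ω => (hrange l ω).1
  calc μ {ω | a + b + 1 ≤ ∑ k, Y k ω}
      ≤ μ (⋃ k, firstPassage Y a k ∩ {ω | b ≤ ∑ l with k < l, Y l ω}) :=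
        measure_mono fun ω h => Set.mem_iUnion.2 (exists_mem_firstPassage hrange ha hb h)
    _ ≤ ∑ k, μ (firstPassage Y a k) * μ {ω | b ≤ ∑ l with k < l, Y l ω} := by
        simp only [← measure_firstPassage_inter_eq_mul hmeas hindep]
        exact measure_iUnion_fintype_le _ _
    _ ≤ ∑ k, μ (firstPassage Y a k) * μ {ω | b ≤ ∑ k, Y k ω} := by
        refine sum_le_sum fun k _ => mul_le_mul_right (measure_mono fun ω (h : b ≤ _) => ?_) _
        exact h.trans (sum_le_sum_of_subset_of_nonneg (filter_subset _ _) fun l _ _ => hY l ω)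
    _ = μ (⋃ k, firstPassage Y a k) * μ {ω | b ≤ ∑ k, Y k ω} := by
        rw [← sum_mul, measure_iUnion (pairwise_disjoint_firstPassage hY a)
          (measurableSet_firstPassage hmeas a), tsum_fintype]
    _ ≤ μ {ω | a ≤ ∑ k, Y k ω} * μ {ω | b ≤ ∑ k, Y k ω} := by
        gcongr
        exact Set.iUnion_subset (firstPassage_subset hY a)

end FirstPassage

section Chernoff

variable {Ω ι : Type*} [MeasurableSpace Ω] {μ : Measure Ω}

lemma exp_mul_le_one_add_mul {y : ℝ} (hy : y ∈ Set.Icc (0 : ℝ) 1) (u : ℝ) :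
    exp (u * y) ≤ 1 + (exp u - 1) * y := by
  have := convexOn_exp.2 (Set.mem_univ 0) (Set.mem_univ u) (sub_nonneg.2 hy.2) hy.1 (by ring)
  simp only [smul_eq_mul, mul_zero, zero_add, exp_zero, mul_one] at this
  rw [mul_comm u y]
  linarith

lemma mgf_le_exp_mul_integral [IsProbabilityMeasure μ] {Y : Ω → ℝ} (hY : Measurable Y)
    (hrange : ∀ ω, Y ω ∈ Set.Icc (0 : ℝ) 1) (u : ℝ) :
    mgf Y μ u ≤ exp ((exp u - 1) * μ[Y]) := by
  have hint : Integrable Y μ := .of_mem_Icc 0 1 hY.aemeasurable (ae_of_all _ hrange)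
  calc mgf Y μ u ≤ ∫ ω, 1 + (exp u - 1) * Y ω ∂μ :=
        integral_mono_of_nonneg (ae_of_all _ fun ω => (exp_pos _).le)
          ((integrable_const 1).add (hint.const_mul _))
          (ae_of_all _ fun ω => exp_mul_le_one_add_mul (hrange ω) u)
    _ = 1 + (exp u - 1) * μ[Y] := by
      rw [integral_add (integrable_const 1) (hint.const_mul _), integral_const_mul]
      simp
    _ ≤ exp ((exp u - 1) * μ[Y]) := by linarith [add_one_le_exp ((exp u - 1) * μ[Y])]

lemma mgf_sum_le_exp_mul_integral [Fintype ι] {Y : ι → Ω → ℝ}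
    (hmeas : ∀ k, Measurable (Y k)) (hrange : ∀ k ω, Y k ω ∈ Set.Icc (0 : ℝ) 1)
    (hindep : iIndepFun Y μ) (u : ℝ) :
    mgf (fun ω => ∑ k, Y k ω) μ u ≤ exp ((exp u - 1) * ∫ ω, ∑ k, Y k ω ∂μ) := by
  have := hindep.isProbabilityMeasure
  have hint : ∀ k, Integrable (Y k) μ := fun k =>
    .of_mem_Icc 0 1 (hmeas k).aemeasurable (ae_of_all _ (hrange k))
  calc mgf (fun ω => ∑ k, Y k ω) μ u = ∏ k, mgf (Y k) μ u := by
        rw [← hindep.mgf_sum hmeas]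
        congr
        ext ω
        simp
    _ ≤ ∏ k, exp ((exp u - 1) * μ[Y k]) :=
        prod_le_prod (fun k _ => mgf_nonneg) fun k _ =>
          mgf_le_exp_mul_integral (hmeas k) (hrange k) u
    _ = exp ((exp u - 1) * ∫ ω, ∑ k, Y k ω ∂μ) := by
        rw [← exp_sum, ← mul_sum, integral_finsetSum _ fun k _ => hint k]

lemma measure_ge_le_ofReal_exp_of_mgf_le [IsFiniteMeasure μ] {W : Ω → ℝ} {t m : ℝ}
    (ht : 0 ≤ t) (hint : Integrable (fun ω => exp (t * W ω)) μ) (hmgf : mgf W μ t ≤ exp m)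
    (s : ℝ) : μ {ω | s ≤ W ω} ≤ ENNReal.ofReal (exp (m - t * s)) := by
  rw [← ofReal_measureReal]
  gcongr
  calc μ.real {ω | s ≤ W ω} ≤ exp (-t * s) * mgf W μ t := measure_ge_le_exp_mul_mgf s ht hint
    _ ≤ exp (-t * s) * exp m := by gcongr
    _ = exp (m - t * s) := by rw [← exp_add]; ring_nf

lemma measure_sum_ge_le_ofReal_exp_of_identDistrib {Z : ι → Ω → ℝ} {X : Ω → ℝ}
    (hmeas : ∀ i, Measurable (Z i)) (hindep : iIndepFun Z μ)
    (hident : ∀ i, IdentDistrib (Z i) X μ μ) {t m : ℝ} (ht : 0 ≤ t)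
    (hint : Integrable (fun ω => exp (t * X ω)) μ) (hmgf : mgf X μ t ≤ exp m)
    (s : Finset ι) (r : ℝ) :
    μ {ω | r ≤ ∑ j ∈ s, Z j ω} ≤ ENNReal.ofReal (exp (#s * m - t * r)) := by
  have := hindep.isProbabilityMeasure
  have hmgf_sum : mgf (∑ j ∈ s, Z j) μ t ≤ exp (#s * m) := by
    rw [hindep.mgf_sum hmeas,
      prod_eq_pow_card fun j _ => congrFun (mgf_congr_identDistrib (hident j)) t, exp_nat_mul]
    exact pow_le_pow_left₀ mgf_nonneg hmgf _
  simpa using measure_ge_le_ofReal_exp_of_mgf_le ht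
    (hindep.integrable_exp_mul_sum hmeas fun j _ =>
      ((hident j).comp (measurable_const_mul t).exp).integrable_iff.2 hint) hmgf_sum r

end Chernoff

section Copies

variable {ι : Type*} [Fintype ι] [DecidableEq ι] [Nonempty ι]

lemma exists_half_le_or_le_and_half_le_sum_erase {z : ι → ℝ} {δ t : ℝ}
    (hδ : Fintype.card ι * δ ≤ t) (h : t ≤ ∑ i, z i) :
    (∃ i, t / 2 ≤ z i) ∨ ∃ i, δ ≤ z i ∧ t / 2 ≤ ∑ j ∈ univ.erase i, z j := by
  refine or_iff_not_imp_left.2 fun hbig => ?_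
  push Not at hbig
  obtain ⟨i, hi⟩ : ∃ i, δ ≤ z i := by
    by_contra! hsmall
    have := sum_lt_sum_of_nonempty univ_nonempty fun i _ => hsmall i
    simp only [sum_const, card_univ, nsmul_eq_mul] at this
    linarith
  have := add_sum_erase univ z (mem_univ i)
  exact ⟨i, hi, by linarith [hbig i]⟩

variable {Ω : Type*} [MeasurableSpace Ω] {μ : Measure Ω}

theorem measure_sum_ge_le_two_mul_card_mul {Z : ι → Ω → ℝ} (hmeas : ∀ i, Measurable (Z i))
    (hindep : iIndepFun Z μ) {δ t : ℝ} (hδ : Fintype.card ι * δ ≤ t) {p r : ℝ≥0∞}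
    (hp : ∀ i, μ {ω | δ ≤ Z i ω} ≤ p) (hbig : ∀ i, μ {ω | t / 2 ≤ Z i ω} ≤ p * r)
    (hrest : ∀ i, μ {ω | t / 2 ≤ ∑ j ∈ univ.erase i, Z j ω} ≤ r) :
    μ {ω | t ≤ ∑ i, Z i ω} ≤ 2 * Fintype.card ι * p * r := by
  have hcover : {ω | t ≤ ∑ i, Z i ω} ⊆ (⋃ i, {ω | t / 2 ≤ Z i ω}) ∪
      ⋃ i, {ω | δ ≤ Z i ω} ∩ {ω | t / 2 ≤ ∑ j ∈ univ.erase i, Z j ω} := fun ω hω =>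
    (exists_half_le_or_le_and_half_le_sum_erase hδ hω).imp
      (fun ⟨i, hi⟩ => Set.mem_iUnion.2 ⟨i, hi⟩) fun ⟨i, hi⟩ => Set.mem_iUnion.2 ⟨i, hi⟩
  have hindep_rest : ∀ i, μ ({ω | δ ≤ Z i ω} ∩ {ω | t / 2 ≤ ∑ j ∈ univ.erase i, Z j ω}) =
      μ {ω | δ ≤ Z i ω} * μ {ω | t / 2 ≤ ∑ j ∈ univ.erase i, Z j ω} := fun i =>
    (hindep.indepFun_finsetSum_of_notMem hmeas (notMem_erase i univ)).symm.meas_inter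
      ⟨Set.Ici δ, measurableSet_Ici, rfl⟩ ⟨Set.Ici (t / 2), measurableSet_Ici, by ext; simp⟩
  calc μ {ω | t ≤ ∑ i, Z i ω}
      ≤ ∑ i, μ {ω | t / 2 ≤ Z i ω} +
          ∑ i, μ ({ω | δ ≤ Z i ω} ∩ {ω | t / 2 ≤ ∑ j ∈ univ.erase i, Z j ω}) :=
        (measure_mono hcover).trans <| (measure_union_le _ _).trans <|
          add_le_add (measure_iUnion_fintype_le _ _) (measure_iUnion_fintype_le _ _)
    _ ≤ ∑ _i : ι, p * r + ∑ _i : ι, p * r := by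
      gcongr with i _ i _
      · exact hbig i
      · rw [hindep_rest]
        exact mul_le_mul' (hp i) (hrest i)
    _ = 2 * Fintype.card ι * p * r := by
      rw [← two_mul, sum_const, nsmul_eq_mul, card_univ]
      ring

end Copies

lemma four_mul_le_exp_div_eighty {t : ℝ} (ht : 4000 ≤ t) : 4 * t ≤ exp (t / 80) := by
  refine le_trans ?_ (pow_div_factorial_le_exp (x := t / 80) (by positivity) 3)
  have : 16000000 ≤ t * t := by nlinarith
  norm_num [Nat.factorial]
  nlinarith

lemma four_thousand_le_mul {δ c : ℝ} (hδ : 0 < δ) (hc : 32000 ≤ c)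
    (hlog : 2000 * log (1 / δ) ≤ c * δ) : 4000 ≤ c * δ := by
  rcases le_or_gt (1 / 8) δ with h | h
  · nlinarith
  · have h8 : log 8 ≤ log (1 / δ) :=
      log_le_log (by norm_num) (by rw [le_div_iff₀ hδ]; linarith)
    have : log 8 = 3 * log 2 := by
      rw [show (8 : ℝ) = 2 ^ 3 by norm_num, log_pow]
      norm_num
    linarith [log_two_gt_d9]

lemma mul_exp_le_one_div_four {δ c : ℝ} (hδ : 0 < δ) (hc : 32000 ≤ c)
    (hlog : 2000 * log (1 / δ) ≤ c * δ) :
    c * exp (c * δ / 3 - log 2 * (c * δ / 2)) ≤ 1 / 4 := by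
  set t := c * δ
  have ht : 4000 ≤ t := four_thousand_le_mul hδ hc hlog
  have hct : c = t * exp (log (1 / δ)) := by
    rw [exp_log (by positivity)]
    field_simp
    rfl
  calc c * exp (t / 3 - log 2 * (t / 2))
      = t * exp (log (1 / δ) + (t / 3 - log 2 * (t / 2))) := by rw [hct, exp_add]; ring
    _ ≤ t * exp (-(t / 80)) := by
      gcongr
      nlinarith [log_two_gt_d9]
    _ ≤ 1 / 4 := by
      rw [exp_neg, ← div_eq_mul_inv, div_le_iff₀ (exp_pos _)]
      linarith [four_mul_le_exp_div_eighty ht]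

section Oversampling

variable {Ω ι κ : Type*} [MeasurableSpace Ω] {μ : Measure Ω}

theorem measure_sum_copies_ge_le [Fintype ι] [LinearOrder ι] [Fintype κ] [DecidableEq κ]
    [Nonempty κ] {Y : ι → Ω → ℝ} (hYmeas : ∀ k, Measurable (Y k))
    (hYrange : ∀ k ω, Y k ω ∈ Set.Icc (0 : ℝ) 1) (hYindep : iIndepFun Y μ)
    {Z : κ → Ω → ℝ} (hZmeas : ∀ i, Measurable (Z i)) (hZindep : iIndepFun Z μ)
    (hident : ∀ i, IdentDistrib (Z i) (fun ω => ∑ k, Y k ω) μ μ) {m δ t r : ℝ}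
    (hm : ∫ ω, ∑ k, Y k ω ∂μ ≤ m) (hδ : 0 < δ) (hδt : Fintype.card κ * δ ≤ t)
    (ht : δ + 1 ≤ t / 2) (hr₁ : m - log 2 * (t / 2 - δ - 1) ≤ r)
    (hr₂ : Fintype.card κ * m - log 2 * (t / 2) ≤ r) :
    μ {ω | t ≤ ∑ i, Z i ω} ≤
      2 * Fintype.card κ * μ {ω | δ ≤ ∑ k, Y k ω} * ENNReal.ofReal (exp r) := by
  have := hYindep.isProbabilityMeasure
  have hXmeas : Measurable fun ω => ∑ k, Y k ω := Finset.measurable_sum _ fun k _ => hYmeas k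
  have hXint : Integrable (fun ω => exp (log 2 * ∑ k, Y k ω)) μ :=
    integrable_exp_mul_of_mem_Icc (a := 0) (b := Fintype.card ι) hXmeas.aemeasurable <|
      ae_of_all _ fun ω => ⟨sum_nonneg fun k _ => (hYrange k ω).1,
        (sum_le_card_nsmul _ _ 1 fun k _ => (hYrange k ω).2).trans (by simp)⟩
  have hmgf : mgf (fun ω => ∑ k, Y k ω) μ (log 2) ≤ exp m := by
    have := mgf_sum_le_exp_mul_integral hYmeas hYrange hYindep (log 2)
    rw [exp_log two_pos] at this
    exact this.trans (exp_le_exp.2 (by linarith))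
  have hm0 : 0 ≤ m :=
    (integral_nonneg fun ω => sum_nonneg fun k _ => (hYrange k ω).1).trans hm
  refine measure_sum_ge_le_two_mul_card_mul hZmeas hZindep hδt
    (fun i => ((hident i).measure_mem_eq measurableSet_Ici).le) (fun i => ?_) fun i => ?_
  · calc μ {ω | t / 2 ≤ Z i ω}
        = μ {ω | δ + (t / 2 - δ - 1) + 1 ≤ ∑ k, Y k ω} := by
          refine ((hident i).measure_mem_eq measurableSet_Ici).trans
            (congrArg μ (Set.ext fun ω => ?_))
          simp only [Set.mem_preimage, Set.mem_Ici, Set.mem_ofPred_eq]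
          ring_nf
      _ ≤ μ {ω | δ ≤ ∑ k, Y k ω} * μ {ω | t / 2 - δ - 1 ≤ ∑ k, Y k ω} :=
          measure_sum_ge_add_add_one_le_mul hYmeas hYrange hYindep hδ (by linarith)
      _ ≤ μ {ω | δ ≤ ∑ k, Y k ω} * ENNReal.ofReal (exp r) := by
          grw [measure_ge_le_ofReal_exp_of_mgf_le (log_nonneg one_le_two) hXint hmgf
            (t / 2 - δ - 1), hr₁]
  · refine (measure_sum_ge_le_ofReal_exp_of_identDistrib hZmeas hZindep hident
      (log_nonneg one_le_two) hXint hmgf _ _).trans ?_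
    have : (#(univ.erase i) : ℝ) ≤ Fintype.card κ := by exact_mod_cast card_erase_le
    gcongr
    nlinarith

end Oversampling

theorem oversampling_lemma_general
    {Ω : Type*} [MeasureSpace Ω]
    (δ : ℝ) (hδ0 : 0 < δ)
    (c : ℕ) (hc : max (32000 : ℝ) (2000 * Real.log (1 / δ) / δ) ≤ (c : ℝ))
    {K : ℕ} (Y : Fin K → Ω → ℝ)
    (hYmeas : ∀ k, Measurable (Y k))
    (hYrange : ∀ k ω, Y k ω ∈ Set.Icc (0 : ℝ) 1)
    (hYindep : iIndepFun Y ℙ)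
    (X : Ω → ℝ) (hX : X = fun ω => ∑ k, Y k ω)
    (Xc : Fin c → Ω → ℝ)
    (hXcmeas : ∀ i, Measurable (Xc i))
    (hXcindep : iIndepFun Xc ℙ)
    (hXcdist : ∀ i, Measure.map (Xc i) ℙ = Measure.map X ℙ)
    (Xbar : Ω → ℝ) (hXbar : Xbar = fun ω => (1 / (c : ℝ)) * ∑ i, Xc i ω)
    (p : ℝ≥0∞) (hEX : ∫ ω, X ω ∂ℙ ≤ δ / 3)
    (hp : ℙ {ω | δ ≤ X ω} = p) :
    ℙ {ω | δ ≤ Xbar ω} ≤ p / 2 := by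
  have hc32 : (32000 : ℝ) ≤ c := (le_max_left _ _).trans hc
  have hlog : 2000 * log (1 / δ) ≤ c * δ := (div_le_iff₀ hδ0).1 ((le_max_right _ _).trans hc)
  have ht : 4000 ≤ (c : ℝ) * δ := four_thousand_le_mul hδ0 hc32 hlog
  have : Nonempty (Fin c) := ⟨⟨0, by exact_mod_cast (by linarith : (0 : ℝ) < c)⟩⟩
  subst hX hXbar hp
  have hmean : {ω | δ ≤ 1 / (c : ℝ) * ∑ i, Xc i ω} = {ω | c * δ ≤ ∑ i, Xc i ω} := by
    ext ω
    rw [Set.mem_ofPred_eq, Set.mem_ofPred_eq, one_div_mul_eq_div, le_div_iff₀ (by linarith),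
      mul_comm]
  set R := exp (c * δ / 3 - log 2 * (c * δ / 2))
  calc ℙ {ω | δ ≤ 1 / (c : ℝ) * ∑ i, Xc i ω}
      ≤ 2 * c * ℙ {ω | δ ≤ ∑ k, Y k ω} * ENNReal.ofReal R := by
        rw [hmean]
        simpa only [Fintype.card_fin] using measure_sum_copies_ge_le hYmeas hYrange hYindep
          hXcmeas hXcindep (fun i => ⟨(hXcmeas i).aemeasurable, by fun_prop, hXcdist i⟩) hEX
          hδ0 (t := c * δ) (r := c * δ / 3 - log 2 * (c * δ / 2)) (by simp) (by nlinarith)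
          (by nlinarith [log_two_lt_d9, log_two_gt_d9]) (by rw [Fintype.card_fin]; linarith)
    _ = ℙ {ω | δ ≤ ∑ k, Y k ω} * ENNReal.ofReal (2 * c * R) := by
        rw [ENNReal.ofReal_mul (by positivity), ENNReal.ofReal_mul (by positivity)]
        simp only [ENNReal.ofReal_ofNat, ENNReal.ofReal_natCast]
        ring
    _ ≤ ℙ {ω | δ ≤ ∑ k, Y k ω} * ENNReal.ofReal (1 / 2) := by
        gcongr
        linarith [mul_exp_le_one_div_four hδ0 hc32 hlog]
    _ = ℙ {ω | δ ≤ ∑ k, Y k ω} / 2 := by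
        rw [ENNReal.ofReal_div_of_pos two_pos]
        simp [div_eq_mul_inv]

/-- **oversampling lemma.** Let `δ ∈ (0, 1/2]` and let `c` be an integer with
`c ≥ max(32000, 2000·log(1/δ)/δ)`.  Let `Y₁, …, Y_K` be independent random variables with values
in `[0,1]`, let `X = Σ_k Y_k`, and let `X̄ = (1/c)·Σ_i X_i` where `X₁, …, X_c` are independent
copies of `X`.  If `E[X] ≤ δ/3` and `P[X ≥ δ] = p`, then `P[X̄ ≥ δ] ≤ p/2`. -/
theorem oversampling_lemma
    {Ω : Type*} [MeasureSpace Ω] [IsProbabilityMeasure (ℙ : Measure Ω)]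
    (δ : ℝ) (hδ0 : 0 < δ) (hδ1 : δ ≤ 1 / 2)
    (c : ℕ) (hc : max (32000 : ℝ) (2000 * Real.log (1 / δ) / δ) ≤ (c : ℝ))
    {K : ℕ} (Y : Fin K → Ω → ℝ)
    (hYmeas : ∀ k, Measurable (Y k))
    (hYrange : ∀ k ω, Y k ω ∈ Set.Icc (0 : ℝ) 1)
    (hYindep : iIndepFun Y ℙ)
    (X : Ω → ℝ) (hX : X = fun ω => ∑ k, Y k ω)
    (Xc : Fin c → Ω → ℝ)
    (hXcmeas : ∀ i, Measurable (Xc i))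
    (hXcindep : iIndepFun Xc ℙ)
    (hXcdist : ∀ i, Measure.map (Xc i) ℙ = Measure.map X ℙ)
    (Xbar : Ω → ℝ) (hXbar : Xbar = fun ω => (1 / (c : ℝ)) * ∑ i, Xc i ω)
    (p : ℝ≥0∞) (hEX : ∫ ω, X ω ∂ℙ ≤ δ / 3)
    (hp : ℙ {ω | δ ≤ X ω} = p) :
    ℙ {ω | δ ≤ Xbar ω} ≤ p / 2 :=
  oversampling_lemma_general δ hδ0 c hc Y hYmeas hYrange hYindep X hX Xc hXcmeas hXcindep hXcdist
    Xbar hXbar p hEX hp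
end

section
/- Let Y₁, …, Y_K be independent random variables with values in [0,1] and let X = Σ_{k=1}^K Y_k. Then for every δ ∈ (0,1] and every real number t, P[X ≥ t and X ≥ δ] ≤ P[X ≥ δ] · P[X ≥ t − 2]. -/
/-!
Split `{X ≥ δ}` according to the first index `k` at which the partial sums of the `Y j` reach
`δ`; these first-passage events are disjoint and depend only on `Y j`, `j ≤ k`. The partial sum
up to `k` overshoots `δ` by at most `Y k ≤ 1`, so it is below `2`, and on `{X ≥ t}` the tail
`∑ j > k, Y j` is at least `t - 2`. The tail is independent of the first-passage event and at most
`X`, so summing over `k` gives `P[X ≥ δ] · P[X ≥ t - 2]`.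
-/

open MeasureTheory ProbabilityTheory
open Finset Function

lemma Finset.disjoint_Iic_Ioi {ι : Type*} [Preorder ι] [LocallyFiniteOrderBot ι]
    [LocallyFiniteOrderTop ι] (k : ι) : Disjoint (Iic k) (Ioi k) :=
  disjoint_left.2 fun _ h₁ h₂ => (mem_Iic.1 h₁).not_gt (mem_Ioi.1 h₂)

section PartialSums

variable {ι : Type*} [LinearOrder ι] [LocallyFiniteOrderBot ι] {y : ι → ℝ} {δ : ℝ}

lemma sum_Iic_le_sum_Iio (hy : 0 ≤ y) {k l : ι} (hkl : k < l) :
    ∑ j ≤ k, y j ≤ ∑ j < l, y j :=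
  sum_le_sum_of_subset_of_nonneg (fun _ hj => mem_Iio.2 ((mem_Iic.1 hj).trans_lt hkl))
    fun j _ _ => hy j

lemma sum_eq_sum_Iic_add_sum_Ioi [Fintype ι] [LocallyFiniteOrderTop ι] {M : Type*}
    [AddCommMonoid M] (f : ι → M) (k : ι) : ∑ j, f j = ∑ j ≤ k, f j + ∑ j > k, f j := by
  rw [← sum_union (disjoint_Iic_Ioi k)]
  congr
  ext j
  simp [le_or_gt]

lemma exists_sum_Iio_lt_le_sum_Iic [Fintype ι] (hy : 0 ≤ y) (hδ : 0 < δ) (h : δ ≤ ∑ j, y j) :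
    ∃ k, ∑ j < k, y j < δ ∧ δ ≤ ∑ j ≤ k, y j := by
  classical
  have hι : (univ : Finset ι).Nonempty := by
    by_contra hempty
    rw [not_nonempty_iff_eq_empty.1 hempty, sum_empty] at h
    linarith
  have hreach : (univ.filter fun k => δ ≤ ∑ j ≤ k, y j).Nonempty := by
    refine ⟨univ.max' hι, mem_filter.2 ⟨mem_univ _, h.trans_eq ?_⟩⟩
    exact sum_congr (eq_univ_of_forall fun j => mem_Iic.2 (le_max' _ j (mem_univ j))).symm
      fun _ _ => rfl
  obtain ⟨k, hk, hmin⟩ := exists_min_image _ id hreach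
  refine ⟨k, lt_of_not_ge fun hle => ?_, (mem_filter.1 hk).2⟩
  -- otherwise the predecessor of the minimal `k` would already reach `δ`
  have hlt : (Iio k).Nonempty := by
    by_contra hempty
    rw [not_nonempty_iff_eq_empty.1 hempty, sum_empty] at hle
    linarith
  have hprev : (Iio k).max' hlt < k := mem_Iio.1 (max'_mem _ hlt)
  refine hprev.not_ge (hmin _ (mem_filter.2 ⟨mem_univ _, hle.trans ?_⟩))
  exact sum_le_sum_of_subset_of_nonneg (fun j hj => mem_Iic.2 (le_max' _ j hj)) fun j _ _ => hy j

lemma sub_two_le_sum_Ioi_of_sum_Iio_lt [Fintype ι] [LocallyFiniteOrderTop ι] (hy : ∀ j, y j ≤ 1)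
    (hδ : δ ≤ 1) {k : ι} (hk : ∑ j < k, y j < δ) {t : ℝ} (ht : t ≤ ∑ j, y j) :
    t - 2 ≤ ∑ j > k, y j := by
  linarith [sum_eq_sum_Iic_add_sum_Ioi y k, sum_Iio_add_eq_sum_Iic (f := y) k, hy k]

end PartialSums

lemma pairwise_disjoint_setOf_sum_Iio_lt_le_sum_Iic {Ω ι : Type*} [LinearOrder ι]
    [LocallyFiniteOrderBot ι] {Y : ι → Ω → ℝ} (hY : ∀ ω, 0 ≤ (Y · ω)) (δ : ℝ) :
    Pairwise (Disjoint on fun k => {ω | ∑ j < k, Y j ω < δ ∧ δ ≤ ∑ j ≤ k, Y j ω}) := by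
  refine (pairwise_disjoint_on _).2 fun k l hkl => Set.disjoint_left.2 fun ω hk hl => ?_
  exact hl.1.not_ge (hk.2.trans (sum_Iic_le_sum_Iio (hY ω) hkl))

lemma measurable_iSup_comap_sum {Ω ι : Type*} {Y : ι → Ω → ℝ} {S s : Finset ι} (hsS : s ⊆ S) :
    Measurable[⨆ j ∈ S, MeasurableSpace.comap (Y j) inferInstance] fun ω => ∑ j ∈ s, Y j ω :=
  Finset.measurable_sum s fun j hj =>
    (comap_measurable (Y j)).mono (le_iSup₂_of_le j (hsS hj) le_rfl) le_rfl

lemma ProbabilityTheory.iIndepFun.measure_inter_eq_mul_of_measurableSet_iSup {Ω ι : Type*}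
    {mΩ : MeasurableSpace Ω} {μ : Measure Ω} {β : ι → Type*} [∀ i, MeasurableSpace (β i)]
    {f : ∀ i, Ω → β i} (hf : iIndepFun f μ) (hfm : ∀ i, Measurable (f i)) {S T : Finset ι} (hST : Disjoint S T)
    {A B : Set Ω} (hA : MeasurableSet[⨆ i ∈ S, MeasurableSpace.comap (f i) inferInstance] A)
    (hB : MeasurableSet[⨆ i ∈ T, MeasurableSpace.comap (f i) inferInstance] B) :
    μ (A ∩ B) = μ A * μ B :=
  (Indep_iff _ _ μ).1 (indep_iSup_of_disjoint (fun i => (hfm i).comap_le)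
    ((iIndepFun_iff_iIndep _ _ _).1 hf) (disjoint_coe.2 hST)) A B hA hB

lemma MeasureTheory.measure_le_mul_of_subset_iUnion_inter {Ω ι : Type*} [MeasurableSpace Ω]
    [Countable ι] {μ : Measure Ω} {A B : ι → Set Ω} {E F G : Set Ω}
    (hA : ∀ k, MeasurableSet (A k)) (hAdisj : Pairwise (Disjoint on A))
    (hAB : ∀ k, μ (A k ∩ B k) = μ (A k) * μ (B k))
    (hE : E ⊆ ⋃ k, A k ∩ B k) (hAF : ∀ k, A k ⊆ F) (hBG : ∀ k, B k ⊆ G) :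
    μ E ≤ μ F * μ G :=
  calc μ E ≤ ∑' k, μ (A k ∩ B k) := (measure_mono hE).trans (measure_iUnion_le _)
    _ = ∑' k, μ (A k) * μ (B k) := tsum_congr hAB
    _ ≤ ∑' k, μ (A k) * μ G := ENNReal.tsum_le_tsum fun k => by gcongr; exact hBG k
    _ = μ (⋃ k, A k) * μ G := by rw [ENNReal.tsum_mul_right, measure_iUnion hAdisj hA]
    _ ≤ μ F * μ G := by gcongr; exact Set.iUnion_subset hAF

theorem prob_ge_and_ge_le_mul_general
    {Ω : Type*} [MeasureSpace Ω]
    {K : ℕ} (Y : Fin K → Ω → ℝ)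
    (hYmeas : ∀ k, Measurable (Y k))
    (hYrange : ∀ k ω, Y k ω ∈ Set.Icc (0 : ℝ) 1)
    (hYindep : iIndepFun Y ℙ)
    (X : Ω → ℝ) (hX : X = fun ω => ∑ k, Y k ω)
    (δ : ℝ) (hδ0 : 0 < δ) (hδ1 : δ ≤ 1) (t : ℝ) :
    ℙ {ω | t ≤ X ω ∧ δ ≤ X ω} ≤ ℙ {ω | δ ≤ X ω} * ℙ {ω | t - 2 ≤ X ω} := by
  subst hX
  have hY0 (ω : Ω) : 0 ≤ (Y · ω) := fun k => (hYrange k ω).1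
  let σY (S : Finset (Fin K)) := ⨆ j ∈ S, MeasurableSpace.comap (Y j) inferInstance
  let A (k : Fin K) := {ω | ∑ j < k, Y j ω < δ ∧ δ ≤ ∑ j ≤ k, Y j ω}
  let B (k : Fin K) := {ω | t - 2 ≤ ∑ j > k, Y j ω}
  have hA (k : Fin K) : MeasurableSet[σY (Iic k)] (A k) :=
    (measurable_iSup_comap_sum Iio_subset_Iic_self measurableSet_Iio).inter
      (measurable_iSup_comap_sum Subset.rfl measurableSet_Ici)
  have hB (k : Fin K) : MeasurableSet[σY (Ioi k)] (B k) :=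
    measurable_iSup_comap_sum Subset.rfl measurableSet_Ici
  refine measure_le_mul_of_subset_iUnion_inter (A := A) (B := B)
    (fun k => iSup₂_le (fun j _ => (hYmeas j).comap_le) _ (hA k))
    (pairwise_disjoint_setOf_sum_Iio_lt_le_sum_Iic hY0 δ)
    (fun k => hYindep.measure_inter_eq_mul_of_measurableSet_iSup hYmeas
      (disjoint_Iic_Ioi k) (hA k) (hB k))
    ?_ (fun k ω hω => hω.2.trans (sum_le_univ_sum_of_nonneg (hY0 ω)))
    (fun k ω hω => le_trans hω (sum_le_univ_sum_of_nonneg (hY0 ω)))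
  rintro ω ⟨ht, hδ⟩
  obtain ⟨k, hlt, hle⟩ := exists_sum_Iio_lt_le_sum_Iic (hY0 ω) hδ0 hδ
  exact Set.mem_iUnion.2 ⟨k, ⟨hlt, hle⟩,
    sub_two_le_sum_Ioi_of_sum_Iio_lt (fun j => (hYrange j ω).2) hδ1 hlt ht⟩

/-- Let `Y₁, …, Y_K` be independent random variables with values in `[0,1]`
and `X = Σ_k Y_k`.  Then for every `δ ∈ (0,1]` and every real `t`,
`P[X ≥ t and X ≥ δ] ≤ P[X ≥ δ] · P[X ≥ t − 2]`. -/
theorem prob_ge_and_ge_le_mul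
    {Ω : Type*} [MeasureSpace Ω] [IsProbabilityMeasure (ℙ : Measure Ω)]
    {K : ℕ} (Y : Fin K → Ω → ℝ)
    (hYmeas : ∀ k, Measurable (Y k))
    (hYrange : ∀ k ω, Y k ω ∈ Set.Icc (0 : ℝ) 1)
    (hYindep : iIndepFun Y ℙ)
    (X : Ω → ℝ) (hX : X = fun ω => ∑ k, Y k ω)
    (δ : ℝ) (hδ0 : 0 < δ) (hδ1 : δ ≤ 1) (t : ℝ) :
    ℙ {ω | t ≤ X ω ∧ δ ≤ X ω} ≤ ℙ {ω | δ ≤ X ω} * ℙ {ω | t - 2 ≤ X ω} :=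
  prob_ge_and_ge_le_mul_general Y hYmeas hYrange hYindep X hX δ hδ0 hδ1 t
end

section
/- Let k ≥ 1 be an integer and let G and H be finite simple graphs admitting a bijection Φ between their vertex sets such that for every vertex v of G, the k-hop neighborhood of v in G is isomorphic to the k-hop neighborhood of Φ(v) in H via an isomorphism sending v to Φ(v). Then for every finite simple graph K with at most k edges and no isolated vertices, #(K:G) = #(K:H). -/
open SimpleGraph

/-- The subgraph of `G` consisting of the edges in `U` together with their endpoints. -/
def edgeSubgraph {V : Type*} (G : SimpleGraph V) (U : Set (Sym2 V)) : G.Subgraph where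
  verts := {v | ∃ w, G.Adj v w ∧ s(v, w) ∈ U}
  Adj v w := G.Adj v w ∧ s(v, w) ∈ U
  adj_sub h := h.1
  edge_vert h := ⟨_, h⟩
  symm := ⟨fun v w h => ⟨h.1.symm, by rw [Sym2.eq_swap]; exact h.2⟩⟩

/-- `#(K : G)`: the number of edge subsets `U ⊆ E(G)` such that the graph consisting of the
edges of `U` together with their endpoints is isomorphic to `K`. -/
noncomputable def subgraphCount {W V : Type*} (K : SimpleGraph W) (G : SimpleGraph V) : ℕ :=
  {U : Set (Sym2 V) | U ⊆ G.edgeSet ∧ Nonempty ((edgeSubgraph G U).coe ≃g K)}.ncard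
/-- The set of vertices of `G` at distance at most `k` from `v`.  The `k`-hop neighborhood of
`v` is the subgraph of `G` induced by this set. -/
def ball {V : Type*} (G : SimpleGraph V) (v : V) (k : ℕ) : Set V :=
  {w | G.Reachable v w ∧ G.dist v w ≤ k}

lemma mem_ball_self {V : Type*} (G : SimpleGraph V) (v : V) (k : ℕ) :
    v ∈ _root_.ball G v k := by
  refine ⟨Reachable.refl v, ?_⟩
  rw [SimpleGraph.dist_self]
  exact Nat.zero_le k

/-!
Homomorphism counts are local: a homomorphism from a connected graph with at most `k` edges that
sends a root `u₀` to `v` stays in the `k`-ball around `v`, so the hop isomorphisms identify the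
homomorphisms rooted at `v` with those rooted at `Φ v`. As homomorphism counts are multiplicative
over disjoint unions, `hom(K, G) = hom(K, H)` for every `K` with at most `k` edges. Sorting
homomorphisms by their kernel `π` gives `hom(K, G) = ∑_π inj(K/π, G)`, where `K/π` has no more
edges than `K` and, unless `π = ⊥`, fewer vertices; by induction the injective counts agree too.
Finally, if `K` has no isolated vertices, each edge set spanning a copy of `K` is the image of
exactly `|Aut K|` injective homomorphisms.
-/

universe u

instance {α : Type*} [Finite α] : Finite (Setoid α) :=
  Finite.of_injective (fun π : Setoid α => ⇑π) fun _ _ => Setoid.eq_iff_rel_eq.mpr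

section

variable {γ : Type u} {V W : Type*} {K : SimpleGraph γ} {G : SimpleGraph V} {H : SimpleGraph W}

instance [Finite γ] [Finite W] : Finite (Copy K H) :=
  Finite.of_injective _ DFunLike.coe_injective

instance [Finite γ] [Finite W] : Finite (K ≃g H) :=
  Finite.of_injective _ DFunLike.coe_injective

lemma ncard_edgeSet_le_of_copy [Finite W] (f : Copy K H) :
    K.edgeSet.ncard ≤ H.edgeSet.ncard := by
  rw [← Nat.card_coe_set_eq, ← Nat.card_coe_set_eq]
  exact Nat.card_le_card_of_injective _ f.mapEdgeSet.injective

lemma SimpleGraph.Connected.dist_le_ncard_edgeSet [Finite γ] (hK : K.Connected) (u v : γ) :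
    K.dist u v ≤ K.edgeSet.ncard := by
  classical
  have := Fintype.ofFinite γ
  obtain ⟨p, hp⟩ := hK.exists_walk_length_eq_dist u v
  rw [← hp, Set.ncard_eq_toFinset_card']
  exact (p.isPath_of_length_eq_dist hp).isTrail.length_le_card_edgeFinset

lemma SimpleGraph.Hom.mem_ball_of_connected [Finite γ] (hK : K.Connected) {k : ℕ}
    (hKk : K.edgeSet.ncard ≤ k) (f : K →g G) (u₀ u : γ) : f u ∈ _root_.ball G (f u₀) k := by
  obtain ⟨p, hp⟩ := hK.exists_walk_length_eq_dist u₀ u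
  refine ⟨(p.map f).reachable, (dist_le (p.map f)).trans ?_⟩
  rw [Walk.length_map, hp]
  exact (hK.dist_le_ncard_edgeSet u₀ u).trans hKk

lemma card_hom_eq_sum_card_apply_eq [Fintype V] [Finite γ] (u₀ : γ) :
    Nat.card (K →g G) = ∑ v, Nat.card {f : K →g G // f u₀ = v} := by
  rw [← Nat.card_sigma, Nat.card_congr (Equiv.sigmaFiberEquiv fun f : K →g G => f u₀)]

def rootedHomEquivOfIso {A : SimpleGraph V} {B : SimpleGraph W} (φ : A ≃g B) (u₀ : γ) {a : V}
    {b : W} (hab : φ a = b) : {f : K →g A // f u₀ = a} ≃ {f : K →g B // f u₀ = b} :=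
  (Iso.refl.homCongr φ).subtypeEquiv fun f => by
    rw [← hab]
    exact φ.injective.eq_iff.symm

def rootedHomEquivBall [Finite γ] (hK : K.Connected) {k : ℕ} (hKk : K.edgeSet.ncard ≤ k)
    (u₀ : γ) (v : V) :
    {f : K →g G.induce (_root_.ball G v k) // f u₀ = ⟨v, mem_ball_self G v k⟩} ≃
      {f : K →g G // f u₀ = v} where
  toFun f := ⟨(Embedding.induce _).toHom.comp f.1, congrArg Subtype.val f.2⟩
  invFun f := ⟨⟨fun u => ⟨f.1 u, by simpa only [f.2] using f.1.mem_ball_of_connected hK hKk u₀ u⟩,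
    f.1.map_adj⟩, Subtype.ext f.2⟩
  left_inv _ := rfl
  right_inv _ := rfl

theorem card_hom_eq_of_connected [Fintype V] [Fintype W] {k : ℕ} (Φ : V ≃ W)
    (hΦ : ∀ v : V,
      ∃ φ : (G.induce (_root_.ball G v k)) ≃g (H.induce (_root_.ball H (Φ v) k)),
        (φ ⟨v, mem_ball_self G v k⟩ : W) = Φ v)
    [Finite γ] (hK : K.Connected) (hKk : K.edgeSet.ncard ≤ k) :
    Nat.card (K →g G) = Nat.card (K →g H) := by
  obtain ⟨u₀⟩ := hK.nonempty
  rw [card_hom_eq_sum_card_apply_eq u₀, card_hom_eq_sum_card_apply_eq u₀, ← Φ.sum_comp]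
  refine Finset.sum_congr rfl fun v _ => ?_
  obtain ⟨φ, hφ⟩ := hΦ v
  exact Nat.card_congr <| (rootedHomEquivBall hK hKk u₀ v).symm.trans
    ((rootedHomEquivOfIso φ u₀ (Subtype.ext hφ)).trans (rootedHomEquivBall hK hKk u₀ (Φ v)))

open Classical in
noncomputable def isoSumInduceCompl (s : Set γ) (hs : ∀ ⦃a b⦄, K.Adj a b → (a ∈ s ↔ b ∈ s)) :
    K ≃g K.induce s ⊕g K.induce sᶜ where
  toEquiv := (Equiv.sumCompl (· ∈ s)).symm
  map_rel_iff' {a b} := by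
    by_cases ha : a ∈ s <;> by_cases hb : b ∈ s
    · simp [Equiv.sumCompl_symm_apply_of_pos ha, Equiv.sumCompl_symm_apply_of_pos hb]
    · simp [Equiv.sumCompl_symm_apply_of_pos ha, Equiv.sumCompl_symm_apply_of_neg hb]
      exact fun h => hb ((hs h).mp ha)
    · simp [Equiv.sumCompl_symm_apply_of_neg ha, Equiv.sumCompl_symm_apply_of_pos hb]
      exact fun h => ha ((hs h).mpr hb)
    · simp [Equiv.sumCompl_symm_apply_of_neg ha, Equiv.sumCompl_symm_apply_of_neg hb]

def homSumEquiv {α β : Type*} {A : SimpleGraph α} {B : SimpleGraph β} :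
    (A ⊕g B →g G) ≃ (A →g G) × (B →g G) where
  toFun f := (f.comp Embedding.sumInl.toHom, f.comp Embedding.sumInr.toHom)
  invFun f := ⟨Sum.elim f.1 f.2, by
    rintro (a | b) (a' | b') h <;> simp_all [f.1.map_adj, f.2.map_adj]⟩
  left_inv f := by ext (a | b) <;> rfl
  right_inv _ := rfl

lemma card_hom_eq_mul_card_hom_compl (s : Set γ) (hs : ∀ ⦃a b⦄, K.Adj a b → (a ∈ s ↔ b ∈ s)) :
    Nat.card (K →g G) = Nat.card (K.induce s →g G) * Nat.card (K.induce sᶜ →g G) := by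
  rw [← Nat.card_prod]
  exact Nat.card_congr (((isoSumInduceCompl s hs).homCongr Iso.refl).trans homSumEquiv)

lemma card_hom_of_isEmpty [IsEmpty γ] : Nat.card (K →g G) = 1 :=
  Nat.card_eq_one_iff_unique.mpr
    ⟨DFunLike.coe_injective.subsingleton, ⟨⟨isEmptyElim, fun {a} => isEmptyElim a⟩⟩⟩

theorem card_hom_eq_of_card_hom_eq_of_connected {k : ℕ}
    (hconn : ∀ {β : Type u} [Finite β] (L : SimpleGraph β), L.Connected →
      L.edgeSet.ncard ≤ k → Nat.card (L →g G) = Nat.card (L →g H))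
    [Finite γ] (K : SimpleGraph γ) (hKk : K.edgeSet.ncard ≤ k) :
    Nat.card (K →g G) = Nat.card (K →g H) := by
  induction hn : Nat.card γ using Nat.strong_induction_on generalizing γ with
  | _ n ih =>
  rcases isEmpty_or_nonempty γ with hγ | ⟨⟨u₀⟩⟩
  · rw [card_hom_of_isEmpty, card_hom_of_isEmpty]
  by_cases hK : K.Connected
  · exact hconn K hK hKk
  obtain ⟨u, hu⟩ : ∃ u, ¬ K.Reachable u₀ u := by
    by_contra! h
    exact hK { preconnected := fun a b => (h a).symm.trans (h b), nonempty := ⟨u₀⟩ }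
  set s := (K.connectedComponentMk u₀).supp
  have hs : ∀ ⦃a b⦄, K.Adj a b → (a ∈ s ↔ b ∈ s) := fun a b hab => by
    simp only [s, ConnectedComponent.mem_supp_iff,
      ConnectedComponent.connectedComponentMk_eq_of_adj hab]
  have hu₀ : u₀ ∈ s := ConnectedComponent.connectedComponentMk_mem
  have hus : u ∉ s := fun h => hu (ConnectedComponent.exact h).symm
  have hlt (t : Set γ) (ht : t ≠ Set.univ) : Nat.card t < n := by
    rw [Nat.card_coe_set_eq, ← hn]
    exact Set.ncard_lt_card ht
  have hle (t : Set γ) : (K.induce t).edgeSet.ncard ≤ k :=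
    (ncard_edgeSet_le_of_copy (Copy.induce K t)).trans hKk
  rw [card_hom_eq_mul_card_hom_compl s hs, card_hom_eq_mul_card_hom_compl s hs,
    ih _ (hlt s fun h => hus (h ▸ trivial)) _ (hle s) rfl,
    ih _ (hlt sᶜ fun h => (h ▸ trivial : u₀ ∈ sᶜ) hu₀) _ (hle sᶜ) rfl]

lemma card_quotient_lt_of_ne_bot [Finite γ] {π : Setoid γ} (hπ : π ≠ ⊥) :
    Nat.card (Quotient π) < Nat.card γ := by
  classical
  have := Fintype.ofFinite γ
  rw [Nat.card_eq_fintype_card, Nat.card_eq_fintype_card]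
  refine Fintype.card_lt_of_surjective_not_injective _ Quotient.mk_surjective fun hinj => hπ ?_
  rw [← Setoid.ker_mk_eq π]
  exact (Setoid.injective_iff_ker_bot _).mp hinj

/-- `K/π`; an edge of `K` inside a class of `π` disappears, since `fromRel` adds no loops. -/
def SimpleGraph.quotientGraph (K : SimpleGraph γ) (π : Setoid γ) : SimpleGraph (Quotient π) :=
  fromRel fun x y => ∃ a b, K.Adj a b ∧ ⟦a⟧ = x ∧ ⟦b⟧ = y

lemma ncard_edgeSet_quotientGraph_le [Finite γ] (π : Setoid γ) :
    (K.quotientGraph π).edgeSet.ncard ≤ K.edgeSet.ncard := by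
  refine (Set.ncard_le_ncard ?_ (K.edgeSet.toFinite.image (Sym2.map (Quotient.mk π)))).trans
    (Set.ncard_image_le K.edgeSet.toFinite)
  refine Sym2.ind fun x y hxy => ?_
  obtain ⟨-, ⟨a, b, hab, rfl, rfl⟩ | ⟨a, b, hab, rfl, rfl⟩⟩ := hxy
  · exact ⟨s(a, b), hab, rfl⟩
  · exact ⟨s(a, b), hab, Sym2.eq_swap⟩

def quotientGraphHom {π : Setoid γ} (hπ : ∀ ⦃a b⦄, K.Adj a b → ¬ π a b) :
    K →g K.quotientGraph π where
  toFun := Quotient.mk π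
  map_rel' {a b} h := ⟨fun e => hπ h (Quotient.exact e), Or.inl ⟨a, b, h, rfl, rfl⟩⟩

def kerHomEquivCopy {π : Setoid γ} (hπ : ∀ ⦃a b⦄, K.Adj a b → ¬ π a b) :
    {f : K →g G // Setoid.ker f = π} ≃ Copy (K.quotientGraph π) G where
  toFun f :=
    { toHom :=
        { toFun := Quotient.lift f.1 fun a b h => Setoid.ker_def.mp (by rw [f.2]; exact h)
          map_rel' := by
            rintro x y ⟨-, ⟨a, b, hab, rfl, rfl⟩ | ⟨a, b, hab, rfl, rfl⟩⟩
            · exact f.1.map_adj hab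
            · exact (f.1.map_adj hab).symm }
      injective' := by
        rintro ⟨a⟩ ⟨b⟩ h
        exact Quotient.sound (by rw [← f.2]; exact Setoid.ker_def.mpr h) }
  invFun g := ⟨g.toHom.comp (quotientGraphHom hπ), Setoid.ext fun a b =>
    Setoid.ker_def.trans (g.injective.eq_iff.trans Quotient.eq)⟩
  left_inv _ := rfl
  right_inv g := Copy.ext (Quotient.ind fun _ => rfl)

lemma isEmpty_hom_ker_eq_of_adj {π : Setoid γ} {a b : γ} (hab : K.Adj a b) (hπ : π a b) :
    IsEmpty {f : K →g G // Setoid.ker f = π} :=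
  ⟨fun f => (f.1.map_adj hab).ne (Setoid.ker_def.mp (by rw [f.2]; exact hπ))⟩

def kerEqBotEquivCopy : {f : K →g G // Setoid.ker f = ⊥} ≃ Copy K G where
  toFun f := ⟨f.1, (Setoid.injective_iff_ker_bot _).mpr f.2⟩
  invFun g := ⟨g.toHom, (Setoid.injective_iff_ker_bot _).mp g.injective⟩
  left_inv _ := rfl
  right_inv _ := rfl

lemma card_hom_eq_sum_card_ker [Finite γ] [Finite V] [Fintype (Setoid γ)] :
    Nat.card (K →g G) = ∑ π : Setoid γ, Nat.card {f : K →g G // Setoid.ker f = π} := by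
  rw [← Nat.card_sigma,
    Nat.card_congr (Equiv.sigmaFiberEquiv fun f : K →g G => Setoid.ker f)]

theorem card_copy_eq_of_card_hom_eq [Finite V] [Finite W] {k : ℕ}
    (hhom : ∀ {β : Type u} [Finite β] (L : SimpleGraph β),
      L.edgeSet.ncard ≤ k → Nat.card (L →g G) = Nat.card (L →g H))
    [Finite γ] (K : SimpleGraph γ) (hKk : K.edgeSet.ncard ≤ k) :
    Nat.card (Copy K G) = Nat.card (Copy K H) := by
  induction hn : Nat.card γ using Nat.strong_induction_on generalizing γ with
  | _ n ih =>
  have hterm (π : Setoid γ) (hπ : π ≠ ⊥) :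
      Nat.card {f : K →g G // Setoid.ker f = π} = Nat.card {f : K →g H // Setoid.ker f = π} := by
    by_cases hind : ∀ ⦃a b⦄, K.Adj a b → ¬ π a b
    · rw [Nat.card_congr (kerHomEquivCopy hind), Nat.card_congr (kerHomEquivCopy hind)]
      exact ih _ (hn ▸ card_quotient_lt_of_ne_bot hπ) _
        ((ncard_edgeSet_quotientGraph_le π).trans hKk) rfl
    · obtain ⟨a, b, hab, hπab⟩ : ∃ a b, K.Adj a b ∧ π a b := by simpa using hind
      have := isEmpty_hom_ker_eq_of_adj (G := G) hab hπab
      have := isEmpty_hom_ker_eq_of_adj (G := H) hab hπab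
      rw [Nat.card_of_isEmpty, Nat.card_of_isEmpty]
  classical
  have := Fintype.ofFinite (Setoid γ)
  have hsum := hhom K hKk
  rw [card_hom_eq_sum_card_ker, card_hom_eq_sum_card_ker,
    ← Finset.add_sum_erase _ _ (Finset.mem_univ ⊥), ← Finset.add_sum_erase _ _ (Finset.mem_univ ⊥),
    Finset.sum_congr rfl fun π hπ => hterm π (Finset.ne_of_mem_erase hπ)] at hsum
  rw [← Nat.card_congr kerEqBotEquivCopy, ← Nat.card_congr kerEqBotEquivCopy]
  exact Nat.add_right_cancel hsum

lemma SimpleGraph.Iso.image_edgeSet (e : K ≃g H) : Sym2.map e '' K.edgeSet = H.edgeSet := by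
  refine e.toHom.image_edgeSet_subset.antisymm fun z hz =>
    ⟨Sym2.map e.symm z, e.symm.map_mem_edgeSet_iff.mpr hz, ?_⟩
  rw [Sym2.map_map]
  simp

lemma edgeSet_edgeSubgraph {U : Set (Sym2 V)} (hU : U ⊆ G.edgeSet) :
    (edgeSubgraph G U).edgeSet = U := by
  ext z
  induction z with
  | _ v w => exact ⟨And.right, fun h => ⟨hU h, h⟩⟩

noncomputable def SimpleGraph.Copy.isoEdgeSubgraph (hK : ∀ a, ∃ b, K.Adj a b) (f : Copy K G)
    {U : Set (Sym2 V)} (hU : Sym2.map f '' K.edgeSet = U) : K ≃g (edgeSubgraph G U).coe where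
  toEquiv := Equiv.ofBijective
    (fun a => ⟨f a, by
      obtain ⟨b, hab⟩ := hK a
      exact ⟨f b, f.toHom.map_adj hab, hU ▸ ⟨s(a, b), hab, rfl⟩⟩⟩)
    ⟨fun a b h => f.injective (congrArg Subtype.val h), by
      rintro ⟨x, w, -, hxw⟩
      rw [← hU] at hxw
      obtain ⟨e, -, he⟩ := hxw
      obtain ⟨a, -, rfl⟩ := Sym2.mem_map.mp (he ▸ Sym2.mem_mk_left x w)
      exact ⟨a, rfl⟩⟩
  map_rel_iff' {a b} := by
    subst hU
    change G.Adj (f a) (f b) ∧ Sym2.map f s(a, b) ∈ Sym2.map f '' K.edgeSet ↔ K.Adj a b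
    rw [(Sym2.map.injective (f := (f : γ → V)) f.injective).mem_set_image]
    exact ⟨And.right, fun h => ⟨f.toHom.map_adj h, h⟩⟩

noncomputable def copyFiberEquivIso (hK : ∀ a, ∃ b, K.Adj a b) {U : Set (Sym2 V)}
    (hU : U ⊆ G.edgeSet) :
    {f : Copy K G // Sym2.map f '' K.edgeSet = U} ≃ (K ≃g (edgeSubgraph G U).coe) where
  toFun f := f.1.isoEdgeSubgraph hK f.2
  invFun e := ⟨(edgeSubgraph G U).coeCopy.comp e.toCopy, by
    change Sym2.map (Subtype.val ∘ e) '' K.edgeSet = U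
    rw [Sym2.map_comp, Set.image_comp, e.image_edgeSet, Subgraph.image_coe_edgeSet_coe,
      edgeSet_edgeSubgraph hU]⟩
  left_inv _ := rfl
  right_inv _ := RelIso.ext fun _ => rfl

theorem card_copy_eq_subgraphCount_mul [Finite γ] [Finite V] (hK : ∀ a, ∃ b, K.Adj a b) :
    Nat.card (Copy K G) = subgraphCount K G * Nat.card (K ≃g K) := by
  set S := {U : Set (Sym2 V) | U ⊆ G.edgeSet ∧ Nonempty ((edgeSubgraph G U).coe ≃g K)}
  have hS (f : Copy K G) : Sym2.map f '' K.edgeSet ∈ S :=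
    ⟨f.toHom.image_edgeSet_subset, ⟨(f.isoEdgeSubgraph hK rfl).symm⟩⟩
  have := Fintype.ofFinite S
  rw [← Nat.card_congr (Equiv.sigmaFiberEquiv fun f => (⟨_, hS f⟩ : S)), Nat.card_sigma,
    subgraphCount, ← Nat.card_coe_set_eq, Nat.card_eq_fintype_card, ← smul_eq_mul,
    ← Finset.card_univ, ← Finset.sum_const]
  refine Finset.sum_congr rfl fun U _ => ?_
  obtain ⟨e⟩ := U.2.2
  exact Nat.card_congr (((Equiv.subtypeEquivRight fun f => Subtype.ext_iff).trans
    (copyFiberEquivIso hK U.2.1)).trans (RelIso.relIsoCongr Iso.refl e))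

end

theorem subgraph_count_eq_of_hop_iso_general {V W : Type*} [Fintype V] [Fintype W]
    (G : SimpleGraph V) (H : SimpleGraph W) (k : ℕ) (Φ : V ≃ W)
    (hΦ : ∀ v : V,
      ∃ φ : (G.induce (_root_.ball G v k)) ≃g (H.induce (_root_.ball H (Φ v) k)),
        (φ ⟨v, mem_ball_self G v k⟩ : W) = Φ v)
    (U : Type) [Fintype U] (K : SimpleGraph U)
    (hKedges : K.edgeSet.ncard ≤ k) (hKnoiso : ∀ u : U, ∃ w, K.Adj u w) :
    subgraphCount K G = subgraphCount K H := by
  have hhom : ∀ {β : Type} [Finite β] (L : SimpleGraph β), L.edgeSet.ncard ≤ k →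
      Nat.card (L →g G) = Nat.card (L →g H) := fun L =>
    card_hom_eq_of_card_hom_eq_of_connected (fun L' hL' => card_hom_eq_of_connected Φ hΦ hL') L
  have hcopy := card_copy_eq_of_card_hom_eq hhom K hKedges
  rw [card_copy_eq_subgraphCount_mul hKnoiso, card_copy_eq_subgraphCount_mul hKnoiso] at hcopy
  exact Nat.eq_of_mul_eq_mul_right (Nat.card_pos_iff.mpr ⟨⟨Iso.refl⟩, inferInstance⟩) hcopy

/-- If `k ≥ 1` and `Φ` is a bijection between the vertex sets of finite simple
graphs `G` and `H` such that for every vertex `v` the `k`-hop neighborhood of `v` in `G` is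
isomorphic to the `k`-hop neighborhood of `Φ v` in `H` via an isomorphism sending `v` to `Φ v`,
then `#(K:G) = #(K:H)` for every finite simple graph `K` with at most `k` edges and no isolated
vertices. -/
theorem subgraph_count_eq_of_hop_iso {V W : Type*} [Fintype V] [Fintype W]
    (G : SimpleGraph V) (H : SimpleGraph W) (k : ℕ) (hk : 1 ≤ k) (Φ : V ≃ W)
    (hΦ : ∀ v : V,
      ∃ φ : (G.induce (_root_.ball G v k)) ≃g (H.induce (_root_.ball H (Φ v) k)),
        (φ ⟨v, mem_ball_self G v k⟩ : W) = Φ v)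
    (U : Type) [Fintype U] (K : SimpleGraph U)
    (hKedges : K.edgeSet.ncard ≤ k) (hKnoiso : ∀ u : U, ∃ w, K.Adj u w) :
    subgraphCount K G = subgraphCount K H :=
  subgraph_count_eq_of_hop_iso_general G H k Φ hΦ U K hKedges hKnoiso
end

section
/- There is an absolute constant C such that for all integers l ≥ 1 and g ≥ 3 there exist a finite group 𝒢 and a generating set S of 𝒢 with |S| ≥ l and |𝒢| ≤ (C·(l+1))^{C·g}, such that the Cayley graph of (𝒢, S) has girth at least g. -/
open SimpleGraph


/-- The Cayley graph of a group `𝒢` with respect to a set `S ⊆ 𝒢`: distinct `g₁` and `g₂` are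
adjacent iff `g₁ * s = g₂` or `g₁ * s⁻¹ = g₂` for some `s ∈ S`. -/
def cayleyGraph {𝒢 : Type*} [Group 𝒢] (S : Set 𝒢) : SimpleGraph 𝒢 where
  Adj g₁ g₂ := g₁ ≠ g₂ ∧ ∃ s ∈ S, g₁ * s = g₂ ∨ g₁ * s⁻¹ = g₂
  symm := by
    constructor
    rintro a b ⟨hne, s, hs, h | h⟩
    · exact ⟨hne.symm, s, hs, Or.inr (by rw [← h, mul_inv_cancel_right])⟩
    · exact ⟨hne.symm, s, hs, Or.inl (by rw [← h, inv_mul_cancel_right])⟩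
  loopless := by constructor; rintro a ⟨hne, -⟩; exact hne rfl

/-
The matrices `γᵢ = AⁱBA⁻ⁱ` (`A = [[1, 2], [0, 1]]`, `B = [[1, 0], [2, 1]]`), `i < m`, play
ping-pong on nonzero integer vectors and therefore generate a free group in `SL(2, ℤ)`. A reduced
word of length `k` in them has entries of absolute value at most `(16 m²)ᵏ`, so it cannot become
trivial modulo `p = (16 m²)ᵍ` when `k < g`. A cycle of length `k` in the Cayley graph of the
reductions modulo `p` spells such a word (reduced, since a cycle never runs back along an edge),
so the girth is at least `g`, while the subgroup they generate has at most `p⁴ = (4m)^(8g)`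
elements. Taking `m = l + 2` gives the bound with `C = 8`.
-/

namespace HighGirthCayley

open MatrixGroups Function Pointwise

section PingPong

/-- `AⁱBA⁻ⁱ` for `A = [[1, 2], [0, 1]]` and `B = [[1, 0], [2, 1]]`. -/
def parabolic (i : ℕ) : SL(2, ℤ) :=
  ⟨!![1 + 4 * i, -8 * i ^ 2; 2, 1 - 4 * i], by simp [Matrix.det_fin_two_of]; ring⟩

def nonzeroVectors : SubMulAction SL(2, ℤ) (Fin 2 → ℤ) where
  carrier := {v | v ≠ 0}
  smul_mem' g _ hv := (smul_ne_zero_iff_ne g).mpr hv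

def offset (i : ℕ) (v : Fin 2 → ℤ) : ℤ := v 0 - 2 * i * v 1

lemma parabolic_smul_apply (i : ℕ) (v : Fin 2 → ℤ) :
    (parabolic i • v) 0 = (1 + 4 * i) * v 0 - 8 * i ^ 2 * v 1 ∧
      (parabolic i • v) 1 = 2 * v 0 + (1 - 4 * i) * v 1 := by
  rw [Matrix.SpecialLinearGroup.smul_def, Matrix.smul_eq_mulVec]
  refine ⟨?_, ?_⟩ <;>
    simp only [parabolic, Matrix.mulVec, dotProduct, Fin.sum_univ_two, Matrix.of_apply,
      Matrix.cons_val', Matrix.cons_val_zero, Matrix.cons_val_one, Matrix.cons_val_fin_one]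
  ring

lemma offset_parabolic_smul (i : ℕ) (v : Fin 2 → ℤ) :
    offset i (parabolic i • v) = offset i v := by
  simp only [offset, parabolic_smul_apply]
  ring

lemma parabolic_smul_apply_one (i : ℕ) (v : Fin 2 → ℤ) :
    (parabolic i • v) 1 = v 1 + 2 * offset i v := by
  simp only [offset, parabolic_smul_apply]
  ring

/- Writing `s = v 1 / offset i v`, the matrix `parabolic i` acts by `s ↦ s + 2`; the
attracting set is `s ≥ 1` (including `offset i v = 0`) and the repelling set is `s < -1`. -/
def attracting (i : ℕ) : Set nonzeroVectors :=
  {v | offset i v ^ 2 ≤ (v : Fin 2 → ℤ) 1 * offset i v}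

def repelling (i : ℕ) : Set nonzeroVectors :=
  {v | (v : Fin 2 → ℤ) 1 * offset i v < -offset i v ^ 2}

lemma apply_one_ne_zero_of_mem {i : ℕ} {v : nonzeroVectors}
    (hv : v ∈ attracting i ∪ repelling i) : (v : Fin 2 → ℤ) 1 ≠ 0 := by
  intro hy
  have hd : offset i v = (v : Fin 2 → ℤ) 0 := by simp [offset, hy]
  have hx : (v : Fin 2 → ℤ) 0 = 0 := by
    rcases hv with hv | hv <;>
      simp only [attracting, repelling, Set.mem_ofPred_eq, hd, hy] at hv <;> nlinarith
  exact v.2 (funext fun j => by fin_cases j <;> assumption)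

lemma mul_offset_bounds_of_mem {i : ℕ} {v : nonzeroVectors}
    (hv : v ∈ attracting i ∪ repelling i) :
    -(v : Fin 2 → ℤ) 1 ^ 2 < (v : Fin 2 → ℤ) 1 * offset i v ∧
      (v : Fin 2 → ℤ) 1 * offset i v ≤ (v : Fin 2 → ℤ) 1 ^ 2 := by
  have hy : 0 < (v : Fin 2 → ℤ) 1 ^ 2 := by positivity [apply_one_ne_zero_of_mem hv]
  rcases hv with hv | hv <;> simp only [attracting, repelling, Set.mem_ofPred_eq] at hv <;>
    constructor <;>
    nlinarith [sq_nonneg ((v : Fin 2 → ℤ) 1 - offset i v),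
      sq_nonneg ((v : Fin 2 → ℤ) 1 + offset i v)]

/-- Changing `i` by one shifts `v 1 * offset i v` by `2 * v 1 ^ 2`, the length of the interval
it is confined to. -/
lemma eq_of_mem_of_mem {i j : ℕ} {v : nonzeroVectors} (hi : v ∈ attracting i ∪ repelling i)
    (hj : v ∈ attracting j ∪ repelling j) : i = j := by
  obtain ⟨hi₁, hi₂⟩ := mul_offset_bounds_of_mem hi
  obtain ⟨hj₁, hj₂⟩ := mul_offset_bounds_of_mem hj
  have hdiff : (v : Fin 2 → ℤ) 1 * offset i v - (v : Fin 2 → ℤ) 1 * offset j v =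
      2 * ((j : ℤ) - i) * (v : Fin 2 → ℤ) 1 ^ 2 := by
    simp only [offset]; ring
  have hy : 0 < (v : Fin 2 → ℤ) 1 ^ 2 := by positivity [apply_one_ne_zero_of_mem hi]
  by_contra hij
  rcases Nat.lt_or_gt_of_ne hij with h | h
  · have : (1 : ℤ) ≤ j - i := by omega
    nlinarith
  · have : (1 : ℤ) ≤ i - j := by omega
    nlinarith

lemma attracting_nonempty (i : ℕ) : (attracting i).Nonempty := by
  refine ⟨⟨![2 * i, 1], fun h => by simpa using congrFun h 1⟩, ?_⟩
  simp [attracting, offset]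

lemma disjoint_attracting_repelling (i : ℕ) : Disjoint (attracting i) (repelling i) :=
  Set.disjoint_left.mpr fun v hX hY => by
    simp only [attracting, repelling, Set.mem_ofPred_eq] at hX hY
    nlinarith [sq_nonneg (offset i v)]

lemma parabolic_smul_compl_repelling_subset (i : ℕ) :
    parabolic i • (repelling i)ᶜ ⊆ attracting i := by
  rintro _ ⟨v, hv, rfl⟩
  simp only [attracting, repelling, Set.mem_compl_iff, Set.mem_ofPred_eq, not_lt] at hv ⊢
  rw [SubMulAction.val_smul, offset_parabolic_smul, parabolic_smul_apply_one]
  linarith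

lemma parabolic_inv_smul_compl_attracting_subset (i : ℕ) :
    (parabolic i)⁻¹ • (attracting i)ᶜ ⊆ repelling i := by
  rintro _ ⟨v, hv, rfl⟩
  obtain ⟨u, rfl⟩ : ∃ u : nonzeroVectors, v = parabolic i • u := ⟨(parabolic i)⁻¹ • v, by simp⟩
  simp only [attracting, repelling, Set.mem_compl_iff, Set.mem_ofPred_eq, not_le,
    inv_smul_smul, SubMulAction.val_smul, offset_parabolic_smul, parabolic_smul_apply_one] at hv ⊢
  linarith

theorem injective_lift_parabolic {ι : Type} [Nontrivial ι] {e : ι → ℕ} (he : Injective e) :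
    Injective (FreeGroup.lift (parabolic ∘ e)) := by
  refine FreeGroup.injective_lift_of_ping_pong _ (fun a => attracting (e a))
    (fun a => repelling (e a)) (fun a => attracting_nonempty _) ?_ ?_ ?_
    (fun a => parabolic_smul_compl_repelling_subset (e a))
    (fun a => parabolic_inv_smul_compl_attracting_subset (e a))
  · refine fun a b hab => Set.disjoint_left.mpr fun v ha hb => hab (he ?_)
    exact eq_of_mem_of_mem (Or.inl ha) (Or.inl hb)
  · refine fun a b hab => Set.disjoint_left.mpr fun v ha hb => hab (he ?_)
    exact eq_of_mem_of_mem (Or.inr ha) (Or.inr hb)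
  · refine fun a b => Set.disjoint_left.mpr fun v ha hb => ?_
    rw [← eq_of_mem_of_mem (Or.inl ha) (Or.inr hb)] at hb
    exact Set.disjoint_left.mp (disjoint_attracting_repelling _) ha hb

end PingPong

section EntryBounds

variable {n : Type*} [Fintype n] [DecidableEq n]

lemma abs_list_prod_apply_le {c : ℤ} (l : List (Matrix n n ℤ)) (h : ∀ A ∈ l, ∀ i j, |A i j| ≤ c)
    (i j : n) : |l.prod i j| ≤ (Fintype.card n * c) ^ l.length := by
  induction l generalizing i j with
  | nil =>
    rw [List.prod_nil, List.length_nil, pow_zero, Matrix.one_apply]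
    split_ifs <;> simp
  | cons A l ih =>
    have hA := h A List.mem_cons_self
    have hl := ih fun B hB => h B (List.mem_cons_of_mem _ hB)
    have hc : 0 ≤ c := (abs_nonneg _).trans (hA i i)
    rw [List.prod_cons, Matrix.mul_apply, List.length_cons, pow_succ']
    calc |∑ k, A i k * l.prod k j| ≤ ∑ k, |A i k| * |l.prod k j| := by
          simpa only [abs_mul] using Finset.abs_sum_le_sum_abs (fun k => A i k * l.prod k j) _
      _ ≤ ∑ _k : n, c * (Fintype.card n * c) ^ l.length :=
          Finset.sum_le_sum fun k _ => mul_le_mul (hA i k) (hl k j) (abs_nonneg _) hc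
      _ = Fintype.card n * c * (Fintype.card n * c) ^ l.length := by
          simp [Finset.sum_const, mul_assoc]

lemma abs_lift_apply_le {ι : Type*} [DecidableEq ι] (ψ : ι → Matrix.SpecialLinearGroup n ℤ)
    {c : ℤ} (hψ : ∀ a i j, |ψ a i j| ≤ c) (hψinv : ∀ a i j, |(ψ a)⁻¹ i j| ≤ c) (x : FreeGroup ι)
    (i j : n) : |FreeGroup.lift ψ x i j| ≤ (Fintype.card n * c) ^ x.norm := by
  have hx : Matrix.SpecialLinearGroup.coeMonoidHom (FreeGroup.lift ψ x) = (x.toWord.map fun a =>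
      Matrix.SpecialLinearGroup.coeMonoidHom (cond a.2 (ψ a.1) (ψ a.1)⁻¹)).prod := by
    conv_lhs => rw [← FreeGroup.mk_toWord (x := x), FreeGroup.lift_mk, map_list_prod, List.map_map]
    rfl
  show |Matrix.SpecialLinearGroup.coeMonoidHom (FreeGroup.lift ψ x) i j| ≤ _
  rw [hx, FreeGroup.norm, ← List.length_map (f := fun a =>
      Matrix.SpecialLinearGroup.coeMonoidHom (cond a.2 (ψ a.1) (ψ a.1)⁻¹))]
  refine abs_list_prod_apply_le _ ?_ i j
  simp only [List.mem_map, forall_exists_index, and_imp]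
  rintro _ ⟨a, b⟩ - rfl
  cases b
  exacts [hψinv a, hψ a]

theorem eq_one_of_map_zmod_eq_one {p : ℕ} {W : Matrix.SpecialLinearGroup n ℤ}
    (hW : Matrix.SpecialLinearGroup.map (Int.castRingHom (ZMod p)) W = 1)
    (hbound : ∀ i j, |W i j| + 1 < p) : W = 1 := by
  ext i j
  have hcongr : ((W i j : ℤ) : ZMod p) = (((1 : Matrix n n ℤ) i j : ℤ) : ZMod p) := by
    simpa [Matrix.one_apply, apply_ite] using
      congrArg (fun A : Matrix.SpecialLinearGroup n (ZMod p) => (A : Matrix n n (ZMod p)) i j) hW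
  have hdvd := (ZMod.intCast_eq_intCast_iff_dvd_sub _ _ _).mp hcongr
  have hsmall : |(1 : Matrix n n ℤ) i j - W i j| < p := by
    have : |(1 : Matrix n n ℤ) i j| ≤ 1 := by rw [Matrix.one_apply]; split_ifs <;> simp
    calc _ ≤ |(1 : Matrix n n ℤ) i j| + |W i j| := abs_sub _ _
      _ < p := by linarith [hbound i j]
  have := Int.eq_zero_of_abs_lt_dvd hdvd hsmall
  rw [Matrix.SpecialLinearGroup.coe_one]
  linarith

end EntryBounds

lemma abs_inv_apply_le_of_abs_apply_le {A : SL(2, ℤ)} {c : ℤ} (h : ∀ i j, |A i j| ≤ c)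
    (i j : Fin 2) : |A⁻¹ i j| ≤ c := by
  rw [Matrix.SpecialLinearGroup.SL2_inv_expl]
  fin_cases i <;> fin_cases j <;> simp [h]

lemma abs_parabolic_apply_le {i M : ℕ} (hi : i < M) (a b : Fin 2) :
    |parabolic i a b| ≤ 8 * M ^ 2 := by
  have hM : (i : ℤ) + 1 ≤ M := by exact_mod_cast hi
  have hi0 : (0 : ℤ) ≤ i := by positivity
  refine abs_le.mpr ⟨?_, ?_⟩ <;> fin_cases a <;> fin_cases b <;>
    simp only [parabolic, Fin.zero_eta, Fin.mk_one, Matrix.of_apply, Matrix.cons_val',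
      Matrix.cons_val_zero, Matrix.cons_val_one, Matrix.cons_val_fin_one] <;> nlinarith

theorem lift_parabolic_map_zmod_ne_one {ι : Type} [Nontrivial ι] [DecidableEq ι] {e : ι → ℕ}
    (he : Injective e) {M p : ℕ} (heM : ∀ a, e a < M) {x : FreeGroup ι} (hx : x ≠ 1)
    (hp : (16 * M ^ 2) ^ x.norm + 1 < p) :
    FreeGroup.lift (fun a => Matrix.SpecialLinearGroup.map (Int.castRingHom (ZMod p))
      (parabolic (e a))) x ≠ 1 := by
  set π := Matrix.SpecialLinearGroup.map (n := Fin 2) (Int.castRingHom (ZMod p))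
  have hcomp : FreeGroup.lift (fun a => π (parabolic (e a))) =
      π.comp (FreeGroup.lift (parabolic ∘ e)) :=
    FreeGroup.ext_hom _ _ fun a => by simp
  rw [hcomp, MonoidHom.comp_apply]
  intro h
  refine hx (injective_lift_parabolic he ?_)
  rw [map_one]
  refine eq_one_of_map_zmod_eq_one h fun i j => ?_
  have hbound := abs_lift_apply_le (parabolic ∘ e) (fun a => abs_parabolic_apply_le (heM a))
    (fun a => abs_inv_apply_le_of_abs_apply_le (abs_parabolic_apply_le (heM a))) x i j
  have h16 : (Fintype.card (Fin 2) : ℤ) * (8 * M ^ 2) = 16 * M ^ 2 := by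
    rw [Fintype.card_fin]; ring
  rw [h16] at hbound
  have hp' : ((16 * M ^ 2) ^ x.norm : ℤ) + 1 < p := by exact_mod_cast hp
  linarith

section CayleyGraph

variable {G : Type*} [Group G]

theorem _root_.SimpleGraph.Walk.prod_darts_inv_mul {Γ : SimpleGraph G} {u v : G}
    (w : Γ.Walk u v) : (w.darts.map fun d => d.fst⁻¹ * d.snd).prod = u⁻¹ * v := by
  induction w with
  | nil => simp
  | cons h p ih => simp [ih, mul_assoc]

variable {ι : Type*} {ψ : ι → G} {S : Set G}

theorem exists_isReduced_of_isTrail (hS : S ⊆ Set.range ψ) {u v : G}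
    {w : (cayleyGraph S).Walk u v} (hw : w.IsTrail) :
    ∃ L : List (ι × Bool), FreeGroup.IsReduced L ∧ L.length = w.length ∧
      (L.map fun a => cond a.2 (ψ a.1) (ψ a.1)⁻¹).prod = u⁻¹ * v := by
  have hletter : ∀ d : (cayleyGraph S).Dart,
      ∃ a : ι × Bool, cond a.2 (ψ a.1) (ψ a.1)⁻¹ = d.fst⁻¹ * d.snd := by
    rintro ⟨⟨x, y⟩, -, s, hs, h⟩
    obtain ⟨a, rfl⟩ := hS hs
    dsimp only at h ⊢
    rcases h with rfl | rfl
    exacts [⟨(a, true), by simp⟩, ⟨(a, false), by simp⟩]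
  choose letter hletter using hletter
  refine ⟨w.darts.map letter, ?_, by simp, ?_⟩
  · have hadj := w.isChain_dartAdj_darts
    have hne := (List.pairwise_map.mp hw.edges_nodup).isChain
    rw [List.isChain_iff_forall_rel_of_append_cons_cons] at hadj hne
    rw [FreeGroup.IsReduced, List.isChain_map, List.isChain_iff_forall_rel_of_append_cons_cons]
    intro d d' l₁ l₂ hsplit hidx
    -- cancelling letters would make the trail run back along the edge it just used
    by_contra hsign
    have hinv : d'.fst⁻¹ * d'.snd = (d.fst⁻¹ * d.snd)⁻¹ := by
      rw [← hletter, ← hletter, ← hidx]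
      cases h₁ : (letter d).2 <;> cases h₂ : (letter d').2 <;> simp_all
    have hfst : d.snd = d'.fst := hadj hsplit
    have hsnd : d'.snd = d.fst := by
      rw [mul_inv_rev, inv_inv, ← hfst] at hinv
      exact mul_left_cancel hinv
    refine hne hsplit ((SimpleGraph.dart_edge_eq_iff _ _).mpr (Or.inr ?_))
    exact SimpleGraph.Dart.ext _ _ (Prod.ext hsnd.symm hfst)
  · simpa [List.map_map, Function.comp_def, hletter] using w.prod_darts_inv_mul

theorem le_egirth_cayleyGraph [DecidableEq ι] (hS : S ⊆ Set.range ψ) {n : ℕ}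
    (h : ∀ x : FreeGroup ι, x ≠ 1 → x.norm < n → FreeGroup.lift ψ x ≠ 1) :
    (n : ℕ∞) ≤ (cayleyGraph S).egirth := by
  refine SimpleGraph.le_egirth.mpr fun u w hw => ?_
  obtain ⟨L, hL, hlen, hprod⟩ := exists_isReduced_of_isTrail hS hw.isTrail
  have hnorm : (FreeGroup.mk L).norm = w.length := by
    rw [FreeGroup.norm, FreeGroup.toWord_mk, hL.reduce_eq, hlen]
  by_contra! hshort
  refine h (FreeGroup.mk L) ?_ (by rw [hnorm]; exact_mod_cast hshort) ?_
  · intro h1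
    have h0 : w.length = 0 := by rw [← hnorm, h1, FreeGroup.norm_one]
    exact hw.not_nil (SimpleGraph.Walk.length_eq_zero_iff.mp h0)
  · rw [FreeGroup.lift_mk, hprod, inv_mul_cancel]

lemma injective_of_lift_ne_one [DecidableEq ι]
    (h : ∀ x : FreeGroup ι, x ≠ 1 → x.norm ≤ 2 → FreeGroup.lift ψ x ≠ 1) : Injective ψ := by
  intro a b hab
  by_contra hne
  refine h (.of a * (.of b)⁻¹) ?_ ?_ (by simp [hab])
  · rwa [ne_eq, mul_inv_eq_one, FreeGroup.of_injective.eq_iff]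
  · calc _ ≤ (FreeGroup.of a).norm + (FreeGroup.of b)⁻¹.norm := FreeGroup.norm_mul_le _ _
      _ = 2 := by simp

theorem exists_cayleyGraph_le_egirth [DecidableEq ι] (ψ : ι → G) {n : ℕ} (hn : 3 ≤ n)
    (h : ∀ x : FreeGroup ι, x ≠ 1 → x.norm < n → FreeGroup.lift ψ x ≠ 1) :
    ∃ (H : Subgroup G) (S : Set H), Subgroup.closure S = ⊤ ∧ S.ncard = Nat.card ι ∧
      (n : ℕ∞) ≤ (cayleyGraph S).egirth := by
  set H := Subgroup.closure (Set.range ψ)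
  let ψH : ι → H := fun a => ⟨ψ a, Subgroup.subset_closure (Set.mem_range_self a)⟩
  have hlift : H.subtype.comp (FreeGroup.lift ψH) = FreeGroup.lift ψ :=
    FreeGroup.ext_hom _ _ fun a => by simp [ψH]
  have hrel : ∀ x : FreeGroup ι, x ≠ 1 → x.norm < n → FreeGroup.lift ψH x ≠ 1 :=
    fun x hx hlen h1 => h x hx hlen (by rw [← hlift, MonoidHom.comp_apply, h1, map_one])
  have hrange : Set.range ψH = Subtype.val ⁻¹' Set.range ψ := by
    ext; simp [ψH, Subtype.ext_iff]
  refine ⟨H, Set.range ψH, ?_, ?_, le_egirth_cayleyGraph subset_rfl hrel⟩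
  · rw [hrange]
    exact Subgroup.closure_closure_coe_preimage
  · exact Set.ncard_range_of_injective
      (injective_of_lift_ne_one fun x hx hlen => hrel x hx (by omega))

end CayleyGraph

lemma card_specialLinearGroup_le {n R : Type*} [Fintype n] [DecidableEq n] [CommRing R]
    [Finite R] :
    Nat.card (Matrix.SpecialLinearGroup n R) ≤ Nat.card R ^ (Nat.card n ^ 2) :=
  calc Nat.card (Matrix.SpecialLinearGroup n R) ≤ Nat.card (n → n → R) :=
        Nat.card_le_card_of_injective _ Subtype.val_injective
    _ = Nat.card R ^ (Nat.card n ^ 2) := by rw [Nat.card_fun, Nat.card_fun, ← pow_mul, sq]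

lemma pow_add_one_lt_pow {K m n : ℕ} (hK : 3 ≤ K) (hmn : m < n) : K ^ m + 1 < K ^ n := by
  have hpos : 1 ≤ K ^ m := Nat.one_le_pow _ _ (by omega)
  calc K ^ m + 1 < 3 * K ^ m := by omega
    _ ≤ K ^ (m + 1) := by rw [pow_succ']; gcongr
    _ ≤ K ^ n := Nat.pow_le_pow_right (by omega) hmn

end HighGirthCayley

open HighGirthCayley MatrixGroups

/-- There is an absolute constant `C` such that for all integers `l ≥ 1` and
`g ≥ 3` there is a finite group `𝒢` with a generating set `S` of size at least `l`, with
`|𝒢| ≤ (C·(l+1))^(C·g)`, whose Cayley graph has girth at least `g`. -/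
theorem exists_high_girth_cayley_graph :
    ∃ C : ℝ, 0 < C ∧
      ∀ l g : ℕ, 1 ≤ l → 3 ≤ g →
        ∃ (𝒢 : Type) (_ : Group 𝒢) (_ : Fintype 𝒢) (S : Set 𝒢),
          Subgroup.closure S = ⊤ ∧
          (l : ℕ) ≤ S.ncard ∧
          (Nat.card 𝒢 : ℝ) ≤ (C * ((l : ℝ) + 1)) ^ (C * (g : ℝ)) ∧
          ((g : ℕ∞) ≤ (cayleyGraph S).egirth) := by
  refine ⟨8, by norm_num, fun l g _ hg => ?_⟩
  set K := 16 * (l + 2) ^ 2 with hK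
  have : NeZero (K ^ g) := ⟨by positivity⟩
  let ψ : Fin (l + 2) → SL(2, ZMod (K ^ g)) :=
    fun a => Matrix.SpecialLinearGroup.map (Int.castRingHom _) (parabolic a)
  obtain ⟨H, S, hgen, hcard, hgirth⟩ := exists_cayleyGraph_le_egirth ψ hg fun x hx hlen =>
    lift_parabolic_map_zmod_ne_one Fin.val_injective Fin.isLt hx
      (pow_add_one_lt_pow (by nlinarith) hlen)
  refine ⟨H, inferInstance, Fintype.ofFinite H, S, hgen, by simp [hcard], ?_, hgirth⟩
  have hcardH : Nat.card H ≤ (K ^ g) ^ 4 :=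
    (H.card_le_card_group.trans card_specialLinearGroup_le).trans_eq (by simp)
  have hK8 : K ≤ (8 * (l + 1)) ^ 2 := by rw [hK]; nlinarith
  calc (Nat.card H : ℝ) ≤ ((K ^ g) ^ 4 : ℕ) := by exact_mod_cast hcardH
    _ ≤ ((8 * (l + 1)) ^ (8 * g) : ℕ) := by
        rw [← pow_mul, show 8 * g = 2 * (g * 4) by ring, pow_mul (8 * (l + 1))]
        gcongr
    _ = (8 * ((l : ℝ) + 1)) ^ (8 * (g : ℝ)) := by
        rw [show (8 : ℝ) * g = ((8 * g : ℕ) : ℝ) by push_cast; ring, Real.rpow_natCast]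
        push_cast
        ring
end

section
/- There exists an absolute constant C such that for all ε ∈ (0, 1/32] and all p, q, r ∈ [0,1] with r ≤ 1/2: if KL(Ber(p) ‖ Ber(q)) ≤ ε and KL(Ber(q) ‖ Ber(r)) ≤ ε, then KL(Ber(p) ‖ Ber(max(r, ε))) ≤ C·ε. -/
/-- The Kullback–Leibler divergence `KL(Ber(a) ‖ Ber(b))` between Bernoulli distributions with
parameters `a` and `b`, valued in `EReal`, with the conventions `0·log(0/x) = 0` and
`y·log(y/0) = ∞` for `y > 0`. -/
noncomputable def klBer (a b : ℝ) : EReal :=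
  (if a = 0 then (0 : EReal)
    else if b = 0 then ⊤
    else ((a * Real.log (a / b) : ℝ) : EReal)) +
  (if a = 1 then (0 : EReal)
    else if b = 1 then ⊤
    else (((1 - a) * Real.log ((1 - a) / (1 - b)) : ℝ) : EReal))

noncomputable def dBer (a b : ℝ) : ℝ :=
  a * Real.log (a / b) + (1 - a) * Real.log ((1 - a) / (1 - b))



lemma key1 (x y : ℝ) (hx : 0 < x) (hy : 0 < y) :
    2 * x - 2 * Real.sqrt (x * y) ≤ x * Real.log (x / y) := by
  have hxy : (0:ℝ) < x / y := div_pos hx hy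
  have h1 : Real.log (Real.sqrt (y / x)) ≤ Real.sqrt (y / x) - 1 :=
    Real.log_le_sub_one_of_pos (Real.sqrt_pos.2 (div_pos hy hx))
  have h2 : Real.log (Real.sqrt (y / x)) = Real.log (y / x) / 2 :=
    Real.log_sqrt (le_of_lt (div_pos hy hx))
  have h3 : Real.log (y / x) = - Real.log (x / y) := by
    rw [← Real.log_inv, inv_div]
  have h4 : x * Real.sqrt (y / x) = Real.sqrt (x * y) := by
    rw [show x * Real.sqrt (y / x) = Real.sqrt (x^2) * Real.sqrt (y / x) by
      rw [Real.sqrt_sq hx.le],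
      ← Real.sqrt_mul (sq_nonneg x)]
    congr 1
    field_simp
  nlinarith [h1, mul_le_mul_of_nonneg_left h1 hx.le]




lemma key2 (x y : ℝ) (hx : 0 ≤ x) (hy : 0 < y) :
    (x - y) + (Real.sqrt x - Real.sqrt y) ^ 2 ≤ x * Real.log (x / y) := by
  have hsx : Real.sqrt x ^ 2 = x := Real.sq_sqrt hx
  have hsy : Real.sqrt y ^ 2 = y := Real.sq_sqrt hy.le
  have hss : Real.sqrt x * Real.sqrt y = Real.sqrt (x * y) := (Real.sqrt_mul hx y).symm
  rcases eq_or_lt_of_le hx with rfl | hx0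
  · simp [Real.sqrt_zero]
    nlinarith [Real.sq_sqrt hy.le]
  · have := key1 x y hx0 hy
    nlinarith

lemma hell (a b : ℝ) (ha0 : 0 ≤ a) (ha1 : a ≤ 1) (hb0 : 0 < b) (hb1 : b < 1) :
    (Real.sqrt a - Real.sqrt b) ^ 2 ≤ dBer a b := by
  have h1 := key2 a b ha0 hb0
  have h2 := key2 (1 - a) (1 - b) (by linarith) (by linarith)
  have h3 : (0:ℝ) ≤ (Real.sqrt (1-a) - Real.sqrt (1-b))^2 := sq_nonneg _
  unfold dBer
  nlinarith

lemma chi2 (a b : ℝ) (ha0 : 0 ≤ a) (ha1 : a ≤ 1) (hb0 : 0 < b) (hb1 : b < 1) :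
    dBer a b ≤ (a - b) ^ 2 / (b * (1 - b)) := by
  have h1b : (0:ℝ) < 1 - b := by linarith
  have t1 : a * Real.log (a / b) ≤ a * (a - b) / b := by
    rcases eq_or_lt_of_le ha0 with rfl | ha
    · simp
    · have hl : Real.log (a / b) ≤ a / b - 1 := Real.log_le_sub_one_of_pos (div_pos ha hb0)
      have := mul_le_mul_of_nonneg_left hl ha0
      have heq : a * (a / b - 1) = a * (a - b) / b := by
        field_simp
        all_goals ring
      exact heq ▸ this
  have t2 : (1 - a) * Real.log ((1 - a) / (1 - b)) ≤ (1 - a) * (b - a) / (1 - b) := by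
    rcases eq_or_lt_of_le ha1 with rfl | ha
    · simp
    · have hl : Real.log ((1-a) / (1-b)) ≤ (1-a) / (1-b) - 1 :=
        Real.log_le_sub_one_of_pos (div_pos (by linarith) h1b)
      have := mul_le_mul_of_nonneg_left hl (by linarith : (0:ℝ) ≤ 1 - a)
      have heq : (1-a) * ((1-a) / (1-b) - 1) = (1-a) * (b - a) / (1-b) := by
        field_simp
        all_goals ring
      exact heq ▸ this
  have key : a * (a - b) / b + (1 - a) * (b - a) / (1 - b) = (a - b)^2 / (b * (1-b)) := by
    field_simp
    ring
  unfold dBer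
  linarith

lemma sq_le_aux (a b M ε : ℝ) (ha0 : 0 ≤ a) (hb0 : 0 ≤ b) (haM : a ≤ M) (hbM : b ≤ M)
    (h : (Real.sqrt a - Real.sqrt b) ^ 2 ≤ ε) : (a - b) ^ 2 ≤ 4 * M * ε := by
  have hM : 0 ≤ M := le_trans ha0 haM
  have hsa : Real.sqrt a ^ 2 = a := Real.sq_sqrt ha0
  have hsb : Real.sqrt b ^ 2 = b := Real.sq_sqrt hb0
  have h1 : Real.sqrt a ^ 2 ≤ M := by rw [hsa]; exact haM
  have h2 : Real.sqrt b ^ 2 ≤ M := by rw [hsb]; exact hbM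
  have h3 : (0:ℝ) ≤ Real.sqrt a := Real.sqrt_nonneg a
  have h4 : (0:ℝ) ≤ Real.sqrt b := Real.sqrt_nonneg b
  have hε : 0 ≤ ε := le_trans (sq_nonneg _) h
  nlinarith [mul_le_mul_of_nonneg_left h (sq_nonneg (Real.sqrt a + Real.sqrt b)),
    sq_nonneg (Real.sqrt a + Real.sqrt b), sq_nonneg (Real.sqrt a - Real.sqrt b)]



lemma klBer_eq (a b : ℝ) (hb0 : 0 < b) (hb1 : b < 1) :
    klBer a b = ((dBer a b : ℝ) : EReal) := by
  unfold klBer dBer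
  rw [if_neg hb0.ne', if_neg hb1.ne]
  rcases eq_or_ne a 0 with rfl | ha0
  · rw [if_pos rfl, if_neg (by norm_num : (0:ℝ) ≠ 1)]
    norm_num
  · rw [if_neg ha0]
    rcases eq_or_ne a 1 with rfl | ha1
    · rw [if_pos rfl]
      norm_num
    · rw [if_neg ha1]
      rw [← EReal.coe_add]

lemma klBer_zero_right (p : ℝ) (hp : p ≠ 0) : klBer p 0 = ⊤ := by
  unfold klBer
  rw [if_neg hp, if_pos rfl]
  rcases eq_or_ne p 1 with rfl | h
  · rw [if_pos rfl]; simp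
  · rw [if_neg h, if_neg (by norm_num : (0:ℝ) ≠ 1)]
    exact EReal.top_add_of_ne_bot (EReal.coe_ne_bot _)

lemma comb (A B D e t : ℝ) (hA : A^2 ≤ 1024*t) (hB : B^2 ≤ 64*t)
    (hD0 : 0 ≤ D) (hDe : D ≤ e) (he0 : 0 ≤ e) (het : e*e ≤ t) :
    (A + B - D)^2 ≤ 1681*t := by
  have hdd : D*D ≤ e*e := mul_le_mul hDe hDe hD0 he0
  nlinarith [sq_nonneg (A - 4*B), sq_nonneg (A + 32*D), sq_nonneg (B + 8*D), hdd, het]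

lemma divstep (x s e : ℝ) (hs0 : 0 < s) (hs2 : s ≤ 1/2) (he : 0 ≤ e)
    (hx : x ≤ 1681*(s*e)) : x / (s*(1-s)) ≤ 3362*e := by
  have h1s : (0:ℝ) < 1 - s := by linarith
  rw [div_le_iff₀ (mul_pos hs0 h1s)]
  nlinarith [mul_nonneg (mul_nonneg hs0.le he) (by linarith : (0:ℝ) ≤ 1 - 2*s)]

lemma neg_log_one_sub_le (ε : ℝ) (h0 : 0 < ε) (h1 : ε ≤ 1/2) :
    Real.log (1 / (1 - ε)) ≤ 2 * ε := by
  have h1e : (0:ℝ) < 1 - ε := by linarith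
  have hl : Real.log (1 / (1 - ε)) ≤ 1 / (1 - ε) - 1 :=
    Real.log_le_sub_one_of_pos (by positivity)
  have h2 : 1 / (1 - ε) ≤ 1 + 2 * ε := by
    rw [div_le_iff₀ h1e]; nlinarith
  linarith

/-- **restricted triangle inequality for KL divergence.** There is an absolute
constant `C` such that for all `ε ∈ (0, 1/32]` and `p, q, r ∈ [0,1]` with `r ≤ 1/2`:
if `KL(Ber(p) ‖ Ber(q)) ≤ ε` and `KL(Ber(q) ‖ Ber(r)) ≤ ε`, then
`KL(Ber(p) ‖ Ber(max(r, ε))) ≤ C·ε`. -/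
theorem klBer_restricted_triangle :
    ∃ C : ℝ, ∀ ε p q r : ℝ, 0 < ε → ε ≤ 1 / 32 →
      p ∈ Set.Icc (0 : ℝ) 1 → q ∈ Set.Icc (0 : ℝ) 1 → r ∈ Set.Icc (0 : ℝ) 1 → r ≤ 1 / 2 →
      klBer p q ≤ ((ε : ℝ) : EReal) → klBer q r ≤ ((ε : ℝ) : EReal) →
      klBer p (max r ε) ≤ ((C * ε : ℝ) : EReal) := by
  use 3362
  intro ε p q r hε hε32 hp hq hr hr2 hpq hqr
  obtain ⟨hp0, hp1⟩ := hp
  obtain ⟨hq0, hq1⟩ := hq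
  obtain ⟨hr0, hr1⟩ := hr
  have hs0 : 0 < max r ε := lt_max_of_lt_right hε
  have hsε : ε ≤ max r ε := le_max_right _ _
  have hrs : r ≤ max r ε := le_max_left _ _
  have hs2 : max r ε ≤ 1/2 := max_le hr2 (by linarith)
  have hs1 : max r ε < 1 := by linarith
  rw [klBer_eq p (max r ε) hs0 hs1]
  rw [EReal.coe_le_coe_iff]
  -- case q = 1
  rcases eq_or_lt_of_le hq1 with rfl | hq1'
  · exfalso
    rcases eq_or_lt_of_le hr0 with rfl | hr0'
    · exact (EReal.coe_lt_top ε).not_ge (klBer_zero_right 1 one_ne_zero ▸ hqr)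
    · rw [klBer_eq 1 r hr0' (by linarith)] at hqr
      have h1 : dBer 1 r ≤ ε := EReal.coe_le_coe_iff.mp hqr
      have h2 : dBer 1 r = Real.log (1/r) := by simp [dBer]
      have h3 : Real.log 2 ≤ Real.log (1/r) := by
        apply Real.log_le_log (by norm_num)
        rw [le_div_iff₀ hr0']; linarith
      have := Real.log_two_gt_d9
      linarith
  -- case q = 0
  rcases eq_or_lt_of_le hq0 with rfl | hq0'
  · -- then p = 0
    have hp' : p = 0 := by
      by_contra h
      exact (EReal.coe_lt_top ε).not_ge (klBer_zero_right p h ▸ hpq)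
    subst hp'
    have hgoal : dBer 0 (max r ε) = Real.log (1 / (1 - max r ε)) := by simp [dBer]
    rw [hgoal]
    rcases max_cases r ε with ⟨hm, hm'⟩ | ⟨hm, hm'⟩
    · -- max = r, with ε ≤ r so r > 0
      rw [hm]
      have hr0' : 0 < r := lt_of_lt_of_le hε hm'
      rw [klBer_eq 0 r hr0' (by linarith)] at hqr
      have h1 : dBer 0 r ≤ ε := EReal.coe_le_coe_iff.mp hqr
      have h2 : dBer 0 r = Real.log (1/(1-r)) := by simp [dBer]
      linarith [h2 ▸ h1]
    · rw [hm]
      have := neg_log_one_sub_le ε hε (by linarith)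
      linarith
  -- case r = 0 (with q > 0): contradiction
  rcases eq_or_lt_of_le hr0 with rfl | hr0'
  · exact absurd hqr ((EReal.coe_lt_top ε).not_ge ∘ (klBer_zero_right q hq0'.ne' ▸ ·))
  -- main case
  rw [klBer_eq p q hq0' hq1'] at hpq
  rw [klBer_eq q r hr0' (by linarith)] at hqr
  have hpq' : dBer p q ≤ ε := EReal.coe_le_coe_iff.mp hpq
  have hqr' : dBer q r ≤ ε := EReal.coe_le_coe_iff.mp hqr
  have h1 : (Real.sqrt p - Real.sqrt q) ^ 2 ≤ ε :=
    le_trans (hell p q hp0 hp1 hq0' hq1') hpq'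
  have h2 : (Real.sqrt q - Real.sqrt r) ^ 2 ≤ ε :=
    le_trans (hell q r hq0 hq1'.le hr0' (by linarith)) hqr'
  have e1 : (p - q) ^ 2 ≤ 4 * max p q * ε :=
    sq_le_aux p q (max p q) ε hp0 hq0 (le_max_left _ _) (le_max_right _ _) h1
  have e2 : (q - r) ^ 2 ≤ 4 * max q r * ε :=
    sq_le_aux q r (max q r) ε hq0 hr0 (le_max_left _ _) (le_max_right _ _) h2
  set s := max r ε with hsdef
  have hq16 : q ≤ 16 * s := by
    by_contra h
    push_neg at h
    have hm : max q r = q := max_eq_left (by linarith)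
    rw [hm] at e2
    nlinarith [sq_nonneg (q - r), mul_pos hs0 hε, hε.le, hs0.le]
  have hp256 : p ≤ 256 * s := by
    by_contra h
    push_neg at h
    have hm : max p q = p := max_eq_left (by linarith)
    rw [hm] at e1
    nlinarith [mul_pos hs0 hε, hε.le, hs0.le]
  have e1' : (p - q) ^ 2 ≤ 1024 * (s * ε) := by
    have hm : max p q ≤ 256 * s := max_le hp256 (by linarith)
    have := mul_le_mul_of_nonneg_right hm hε.le
    linarith
  have e2' : (q - r) ^ 2 ≤ 64 * (s * ε) := by
    have hm : max q r ≤ 16 * s := max_le hq16 (by linarith)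
    have := mul_le_mul_of_nonneg_right hm hε.le
    linarith
  have hd1 : 0 ≤ s - r := by linarith
  have hd2 : s - r ≤ ε := by
    have : s ≤ r + ε := max_le (by linarith) (by linarith)
    linarith
  have hee : ε * ε ≤ s * ε := mul_le_mul_of_nonneg_right hsε hε.le
  have final : (p - s) ^ 2 ≤ 1681 * (s * ε) := by
    have hc := comb (p - q) (q - r) (s - r) ε (s * ε) e1' e2' hd1 hd2 hε.le hee
    have hps : p - s = (p - q) + (q - r) - (s - r) := by ring
    rw [hps]
    exact hc
  have hchi := chi2 p s hp0 hp1 hs0 hs1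
  have hdiv : (p - s) ^ 2 / (s * (1 - s)) ≤ 3362 * ε :=
    divstep _ s ε hs0 hs2 hε.le final
  linarith
end

section
/- Let d ≥ 2 be an integer, ε ∈ (0,1], and for μ ∈ [0,1] set x(μ) = 1 + (d−1)·μ. Then for every λ ∈ [0,1], 1 + ε·d·∫₀^λ x(μ)^{(εd−1)/(1−d)} · x(μ)^{d/(d−1)} dμ ≥ (ε/2)·x(λ)^{2−ε}. -/
/-!
The two powers combine to `x(μ) ^ r` with `r + 1 = (2 - ε) · d / (d - 1)`, so the integral is
explicit and the right-hand side equals `1 + ε (x(λ) ^ (r + 1) - 1) / (2 - ε)`. Since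
`r + 1 ≥ 2 - ε` and `x(λ) ≥ 1`, this dominates `1 + ε (x(λ) ^ (2 - ε) - 1) / (2 - ε)`, which is at
least `ε / 2 · x(λ) ^ (2 - ε)` when `ε ≤ 1`.
-/

open intervalIntegral

theorem integral_one_add_mul_rpow {c r : ℝ} (hc : c ≠ 0) (hr : -1 < r) (b : ℝ) :
    ∫ μ in (0 : ℝ)..b, (1 + c * μ) ^ r = ((1 + c * b) ^ (r + 1) - 1) / (c * (r + 1)) := by
  rw [integral_comp_add_mul (fun x : ℝ => x ^ r) hc, integral_rpow (Or.inl hr), smul_eq_mul,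
    mul_zero, add_zero, Real.one_rpow, inv_mul_eq_div, div_div, mul_comm c (r + 1)]

theorem half_mul_rpow_le_one_add {ε s X : ℝ} (hε0 : 0 < ε) (hε1 : ε ≤ 1) (hs : 2 - ε ≤ s)
    (hX : 1 ≤ X) :
    ε / 2 * X ^ (2 - ε) ≤ 1 + ε * (X ^ s - 1) / (2 - ε) := by
  have hZY : X ^ (2 - ε) ≤ X ^ s := Real.rpow_le_rpow_of_exponent_le hX hs
  rw [← sub_nonneg]
  have h2ε : 0 < 2 - ε := by linarith
  have key : 1 + ε * (X ^ s - 1) / (2 - ε) - ε / 2 * X ^ (2 - ε) =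
      (4 * (1 - ε) + 2 * ε * (X ^ s - X ^ (2 - ε)) + ε ^ 2 * X ^ (2 - ε)) / (2 * (2 - ε)) := by
    field_simp
    ring
  rw [key]
  have := mul_nonneg hε0.le (sub_nonneg.2 hZY)
  positivity

theorem t_e0_lower_bound_general (d : ℕ) (hd : 2 ≤ d) (ε : ℝ) (hε0 : 0 < ε) (hε1 : ε ≤ 1)
    (lam : ℝ) (h0 : 0 ≤ lam) :
    ε / 2 * (1 + ((d : ℝ) - 1) * lam) ^ (2 - ε) ≤
      1 + ε * (d : ℝ) * ∫ μ in (0 : ℝ)..lam,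
        (1 + ((d : ℝ) - 1) * μ) ^ ((ε * (d : ℝ) - 1) / (1 - (d : ℝ))) *
          (1 + ((d : ℝ) - 1) * μ) ^ ((d : ℝ) / ((d : ℝ) - 1)) := by
  have hd2 : (2 : ℝ) ≤ d := by exact_mod_cast hd
  have hc : (0 : ℝ) < d - 1 := by linarith
  set r := (ε * d - 1) / (1 - d) + d / (d - 1) with hr
  have hr1 : r + 1 = (2 - ε) * (d / (d - 1)) := by
    have h1d : (1 : ℝ) - d ≠ 0 := by linarith
    rw [hr]
    field_simp
    ring
  have hbase : ∀ μ ∈ Set.uIcc 0 lam, 0 < 1 + ((d : ℝ) - 1) * μ := fun μ hμ => by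
    rw [Set.uIcc_of_le h0] at hμ
    nlinarith [hμ.1]
  have hintegrand : ∫ μ in (0 : ℝ)..lam,
      (1 + ((d : ℝ) - 1) * μ) ^ ((ε * d - 1) / (1 - d)) *
        (1 + ((d : ℝ) - 1) * μ) ^ ((d : ℝ) / (d - 1)) =
      ∫ μ in (0 : ℝ)..lam, (1 + ((d : ℝ) - 1) * μ) ^ r :=
    integral_congr fun μ hμ => (Real.rpow_add (hbase μ hμ) _ _).symm
  have hs : 2 - ε ≤ r + 1 := by
    rw [hr1]
    exact le_mul_of_one_le_right (by linarith) ((one_le_div hc).2 (by linarith))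
  rw [hintegrand, integral_one_add_mul_rpow hc.ne' (by linarith) lam]
  convert half_mul_rpow_le_one_add hε0 hε1 hs (X := 1 + ((d : ℝ) - 1) * lam) (by nlinarith)
    using 2
  rw [hr1]
  field_simp

/-- For an integer `d ≥ 2`, `ε ∈ (0,1]` and `x(μ) = 1 + (d−1)μ`, for every
`λ ∈ [0,1]` one has
`1 + ε·d·∫₀^λ x(μ)^((εd−1)/(1−d)) · x(μ)^(d/(d−1)) dμ ≥ (ε/2)·x(λ)^(2−ε)`. -/
theorem t_e0_lower_bound (d : ℕ) (hd : 2 ≤ d) (ε : ℝ) (hε0 : 0 < ε) (hε1 : ε ≤ 1)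
    (lam : ℝ) (h0 : 0 ≤ lam) (h1 : lam ≤ 1) :
    ε / 2 * (1 + ((d : ℝ) - 1) * lam) ^ (2 - ε) ≤
      1 + ε * (d : ℝ) * ∫ μ in (0 : ℝ)..lam,
        (1 + ((d : ℝ) - 1) * μ) ^ ((ε * (d : ℝ) - 1) / (1 - (d : ℝ))) *
          (1 + ((d : ℝ) - 1) * μ) ^ ((d : ℝ) / ((d : ℝ) - 1)) :=
  t_e0_lower_bound_general d hd ε hε0 hε1 lam h0
end
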